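/- arXiv:1502.00842 — 6 statements merged into one kernel-verified Lean document; each statement's English description precedes it below -/
import Mathlib

section
/- Let t·α = s·k + r with s ≥ 1 and 0 ≤ r ≤ k−1, and suppose k − r ≤ C(t,s). Then there exists a k×t binary matrix M0 such that: (i) each column of M0 has exactly α ones; (ii) the minimum row weight of M0 equals s; and (iii) for every row of minimum weight s, no other row of M0 has the same support (i.e., Γ(M0) = 1). -/
open Finset

lemma sum_near_regular (G : Finset ℕ) (d : ℕ → ℕ) (a : ℕ)
    (hd : ∀ j ∈ G, d j = a ∨ d j = a + 1) :
    ∑ j ∈ G, d j = a * G.card + (G.filter (fun j => d j = a + 1)).card := by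
  calc ∑ j ∈ G, d j = ∑ j ∈ G, (a + if d j = a + 1 then 1 else 0) := by
        refine Finset.sum_congr rfl ?_
        intro j hj; rcases hd j hj with h | h <;> simp [h]
      _ = (∑ _j ∈ G, a) + ∑ j ∈ G, (if d j = a + 1 then 1 else 0) :=
        Finset.sum_add_distrib
      _ = a * G.card + (G.filter (fun j => d j = a + 1)).card := by
        rw [Finset.sum_const, smul_eq_mul, mul_comm, Finset.card_filter]

lemma sum_indicator_add (G Pe : Finset ℕ) (b : ℕ) (hPe : Pe ⊆ G) :
    ∑ j ∈ G, (if j ∈ Pe then b + 1 else b) = b * G.card + Pe.card := by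
  calc ∑ j ∈ G, (if j ∈ Pe then b + 1 else b)
      = ∑ j ∈ G, (b + if j ∈ Pe then 1 else 0) := by
        refine Finset.sum_congr rfl ?_; intro j _; split <;> simp
    _ = (∑ _j ∈ G, b) + ∑ j ∈ G, (if j ∈ Pe then 1 else 0) := Finset.sum_add_distrib
    _ = b * G.card + Pe.card := by
        rw [Finset.sum_const, smul_eq_mul, mul_comm]
        congr 1
        rw [← Finset.card_filter, Finset.filter_mem_eq_inter,
          Finset.inter_eq_right.mpr hPe]

lemma sum_sub_pointwise (G : Finset ℕ) (d e : ℕ → ℕ) (hle : ∀ j ∈ G, e j ≤ d j) :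
    (∑ j ∈ G, (d j - e j)) + ∑ j ∈ G, e j = ∑ j ∈ G, d j := by
  rw [← Finset.sum_add_distrib]
  exact Finset.sum_congr rfl (fun j hj => Nat.sub_add_cancel (hle j hj))

lemma lemB (G : Finset ℕ) (d : ℕ → ℕ) (a P Q : ℕ)
    (hd : ∀ j ∈ G, d j = a ∨ d j = a + 1)
    (hPQ : P + Q = ∑ j ∈ G, d j) :
    ∃ e f : ℕ → ℕ, (∀ j ∈ G, e j + f j = d j) ∧
      (∃ b, ∀ j ∈ G, e j = b ∨ e j = b + 1) ∧
      (∃ c, ∀ j ∈ G, f j = c ∨ f j = c + 1) ∧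
      (∑ j ∈ G, e j = P) ∧ (∑ j ∈ G, f j = Q) := by
  rcases Nat.eq_zero_or_pos G.card with hm | hm
  · rw [Finset.card_eq_zero] at hm
    subst hm
    simp only [Finset.sum_empty] at hPQ ⊢
    exact ⟨fun _ => 0, fun _ => 0, by simp, ⟨0, by simp⟩, ⟨0, by simp⟩,
      by omega, by omega⟩
  obtain ⟨m, hmdef⟩ : ∃ m, G.card = m := ⟨_, rfl⟩
  rw [hmdef] at hm
  obtain ⟨b, p, hP, hpm⟩ : ∃ b p, b * m + p = P ∧ p < m :=
    ⟨P / m, P % m, by rw [mul_comm]; exact Nat.div_add_mod P m, Nat.mod_lt _ hm⟩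
  obtain ⟨c, q, hQ, hqm⟩ : ∃ c q, c * m + q = Q ∧ q < m :=
    ⟨Q / m, Q % m, by rw [mul_comm]; exact Nat.div_add_mod Q m, Nat.mod_lt _ hm⟩
  have hmemH : ∀ j, j ∈ G.filter (fun j => d j = a + 1) ↔ (j ∈ G ∧ d j = a + 1) := by
    intro j; exact Finset.mem_filter
  obtain ⟨H, hHdef⟩ : ∃ H, G.filter (fun j => d j = a + 1) = H := ⟨_, rfl⟩
  rw [hHdef] at hmemH
  have hHG : H ⊆ G := by rw [← hHdef]; exact Finset.filter_subset _ _
  obtain ⟨h, hhdef⟩ : ∃ h, H.card = h := ⟨_, rfl⟩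
  have hhm : h ≤ m := by rw [← hhdef, ← hmdef]; exact Finset.card_le_card hHG
  have hsum : ∑ j ∈ G, d j = a * m + h := by
    rw [sum_near_regular G d a hd, hHdef, hmdef, hhdef]
  have hE : a * m + h = (b * m + p) + (c * m + q) := by rw [hP, hQ, hPQ, hsum]
  have hdH : ∀ j ∈ G, (j ∈ H → d j = a + 1) ∧ (j ∉ H → d j = a) := by
    intro j hj
    refine ⟨fun hjH => ((hmemH j).mp hjH).2, fun hjH => ?_⟩
    rcases hd j hj with h1 | h1
    · exact h1
    · exact absurd ((hmemH j).mpr ⟨hj, h1⟩) hjH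
  rcases lt_trichotomy (b + c) a with hlt | heq' | hgt
  · -- b + c < a; must have b + c + 1 = a
    have hcase : b + c + 1 = a := by
      by_contra hne
      have h2 : b + c + 2 ≤ a := by omega
      have hmm : (b + c + 2) * m ≤ a * m := Nat.mul_le_mul_right m h2
      rw [add_mul, add_mul] at hmm
      omega
    have hkey : p + q = m + h := by
      have h3 : a * m = (b + c + 1) * m := by rw [hcase]
      rw [add_mul, add_mul, one_mul] at h3
      omega
    have hcard : p - h ≤ (G \ H).card := by
      rw [Finset.card_sdiff_of_subset hHG, hmdef, hhdef]; omega
    obtain ⟨Pe, hPeSub, hPeCard⟩ := Finset.exists_subset_card_eq hcard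
    have hPeG : Pe ⊆ G := hPeSub.trans Finset.sdiff_subset
    have hdisj : Disjoint H Pe := by
      refine Finset.disjoint_left.mpr (fun x hx hx2 => ?_)
      exact absurd hx (Finset.mem_sdiff.mp (hPeSub hx2)).2
    have hUG : H ∪ Pe ⊆ G := Finset.union_subset hHG hPeG
    have hUcard : (H ∪ Pe).card = p := by
      rw [Finset.card_union_of_disjoint hdisj, hhdef, hPeCard]; omega
    have hPenotH : ∀ j ∈ Pe, j ∉ H := fun j hj =>
      (Finset.mem_sdiff.mp (hPeSub hj)).2
    have hle : ∀ j ∈ G, (if j ∈ H ∪ Pe then b + 1 else b) ≤ d j := by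
      intro j hj
      by_cases hjU : j ∈ H ∪ Pe
      · simp only [hjU, if_pos]
        rcases Finset.mem_union.mp hjU with hjH | hjP
        · have := (hdH j hj).1 hjH; omega
        · have := (hdH j hj).2 (hPenotH j hjP); omega
      · simp only [hjU, if_neg, if_false]
        rcases hd j hj with h1 | h1 <;> omega
    refine ⟨fun j => if j ∈ H ∪ Pe then b + 1 else b,
      fun j => d j - (if j ∈ H ∪ Pe then b + 1 else b),
      fun j hj => by beta_reduce; have := hle j hj; omega, ⟨b, fun j _ => by beta_reduce; split <;> simp⟩,
      ⟨c, ?_⟩, ?_, ?_⟩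
    · intro j hj
      by_cases hjU : j ∈ H ∪ Pe
      · simp only [hjU, if_pos]
        rcases Finset.mem_union.mp hjU with hjH | hjP
        · have := (hdH j hj).1 hjH; right; omega
        · have := (hdH j hj).2 (hPenotH j hjP); left; omega
      · simp only [hjU, if_neg, if_false]
        have := (hdH j hj).2 (fun hjH => hjU (Finset.mem_union_left _ hjH))
        right; omega
    · rw [sum_indicator_add G (H ∪ Pe) b hUG, hUcard, hmdef]; omega
    · beta_reduce
      have hsplit := sum_sub_pointwise G d _ hle
      rw [sum_indicator_add G (H ∪ Pe) b hUG, hUcard, hmdef] at hsplit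
      omega
  · -- b + c = a : h = p + q
    have hkey : h = p + q := by
      have h3 : a * m = (b + c) * m := by rw [heq']
      rw [add_mul] at h3
      omega
    obtain ⟨Pe, hPeSub, hPeCard⟩ :=
      Finset.exists_subset_card_eq (show p ≤ H.card by rw [hhdef]; omega)
    have hPeG : Pe ⊆ G := hPeSub.trans hHG
    have hle : ∀ j ∈ G, (if j ∈ Pe then b + 1 else b) ≤ d j := by
      intro j hj
      by_cases hjP : j ∈ Pe
      · have := (hdH j hj).1 (hPeSub hjP)
        simp only [hjP, if_pos]; omega
      · rcases hd j hj with h1 | h1 <;> simp only [hjP, if_neg, if_false] <;> omega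
    refine ⟨fun j => if j ∈ Pe then b + 1 else b,
      fun j => d j - (if j ∈ Pe then b + 1 else b),
      fun j hj => by beta_reduce; have := hle j hj; omega, ⟨b, fun j _ => by beta_reduce; split <;> simp⟩,
      ⟨c, ?_⟩, ?_, ?_⟩
    · intro j hj
      by_cases hjP : j ∈ Pe
      · have := (hdH j hj).1 (hPeSub hjP)
        simp only [hjP, if_pos]; left; omega
      · simp only [hjP, if_neg, if_false]
        by_cases hjH : j ∈ H
        · have := (hdH j hj).1 hjH; right; omega
        · have := (hdH j hj).2 hjH; left; omega
    · rw [sum_indicator_add G Pe b hPeG, hPeCard, hmdef]; omega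
    · beta_reduce
      have hsplit := sum_sub_pointwise G d _ hle
      rw [sum_indicator_add G Pe b hPeG, hPeCard, hmdef] at hsplit
      omega
  · -- b + c > a : forces b + c = a + 1, h = m, p = q = 0
    have hcase : b + c = a + 1 := by
      by_contra hne
      have h2 : a + 2 ≤ b + c := by omega
      have hmm : (a + 2) * m ≤ (b + c) * m := Nat.mul_le_mul_right m h2
      rw [add_mul, add_mul] at hmm
      omega
    have hkey : h = m + p + q := by
      have h3 : (b + c) * m = (a + 1) * m := by rw [hcase]
      rw [add_mul, add_mul, one_mul] at h3
      omega
    have hHG' : H = G := Finset.eq_of_subset_of_card_le hHG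
      (by rw [hmdef, hhdef]; omega)
    have hval : ∀ j ∈ G, d j = a + 1 := by
      intro j hj
      exact (hdH j hj).1 (by rw [hHG']; exact hj)
    refine ⟨fun _ => b, fun j => d j - b, ?_, ⟨b, fun j _ => Or.inl rfl⟩,
      ⟨c, ?_⟩, ?_, ?_⟩
    · intro j hj; show b + (d j - b) = d j; have := hval j hj; omega
    · intro j hj; show d j - b = c ∨ d j - b = c + 1; have := hval j hj; left; omega
    · show (∑ _j ∈ G, b) = P
      rw [Finset.sum_const, smul_eq_mul, mul_comm, hmdef]; omega
    · show (∑ j ∈ G, (d j - b)) = Q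
      have hsplit : (∑ j ∈ G, (d j - b)) + (∑ _j ∈ G, b) = ∑ j ∈ G, d j := by
        rw [← Finset.sum_add_distrib]
        exact Finset.sum_congr rfl fun j hj =>
          Nat.sub_add_cancel (by have := hval j hj; omega)
      rw [Finset.sum_const, smul_eq_mul, mul_comm, hmdef] at hsplit
      omega

lemma lemA (t : ℕ) : ∀ (G : Finset ℕ), G.card = t → ∀ (s n : ℕ) (d : ℕ → ℕ) (a : ℕ),
    n ≤ t.choose s → (∀ j ∈ G, d j = a ∨ d j = a + 1) → (∑ j ∈ G, d j = s * n) →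
    ∃ F : Finset (Finset ℕ), F.card = n ∧ (∀ S ∈ F, S ⊆ G ∧ S.card = s) ∧
      ∀ j ∈ G, (F.filter (fun S => j ∈ S)).card = d j := by
  induction t using Nat.strong_induction_on with
  | _ t IH =>
  intro G hG s n d a hn hd hsum
  rcases Nat.eq_zero_or_pos n with hn0 | hn1
  · subst hn0
    rw [mul_zero] at hsum
    have hzero : ∀ j ∈ G, d j = 0 := fun j hj => (Finset.sum_eq_zero_iff.mp hsum) j hj
    exact ⟨∅, rfl, by simp, fun j hj => by simp [hzero j hj]⟩
  rcases Nat.eq_zero_or_pos s with hs0 | hs1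
  · subst hs0
    rw [Nat.choose_zero_right] at hn
    have hn' : n = 1 := le_antisymm hn hn1
    subst hn'
    rw [zero_mul] at hsum
    have hzero : ∀ j ∈ G, d j = 0 := fun j hj => (Finset.sum_eq_zero_iff.mp hsum) j hj
    refine ⟨{∅}, rfl, by simp, fun j hj => ?_⟩
    rw [Finset.filter_singleton]
    simp [hzero j hj]
  -- main case : s ≥ 1, n ≥ 1
  obtain ⟨s', rfl⟩ : ∃ s', s = s' + 1 := ⟨s - 1, by omega⟩
  have hst : s' + 1 ≤ t := by
    by_contra hlt
    rw [Nat.choose_eq_zero_of_lt (by omega)] at hn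
    omega
  obtain ⟨u, rfl⟩ : ∃ u, t = u + 1 := ⟨t - 1, by omega⟩
  have hGne : G.Nonempty := Finset.card_pos.mp (by omega)
  obtain ⟨j₀, hj₀G, hj₀max⟩ := Finset.exists_max_image G d hGne
  set x := d j₀ with hx
  set G' := G.erase j₀ with hG'
  have hG'card : G'.card = u := by rw [hG', Finset.card_erase_of_mem hj₀G, hG]; omega
  have hG'sub : G' ⊆ G := Finset.erase_subset _ _
  have hA : x + ∑ j ∈ G', d j = (s' + 1) * n := by
    rw [hx, hG', Finset.add_sum_erase G d hj₀G, hsum]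
  have hB : (x - 1) * u ≤ ∑ j ∈ G', d j := by
    calc (x - 1) * u = ∑ _j ∈ G', (x - 1) := by
          rw [Finset.sum_const, hG'card, smul_eq_mul, mul_comm]
      _ ≤ ∑ j ∈ G', d j := by
          refine Finset.sum_le_sum ?_
          intro j hj
          rcases hd j (hG'sub hj) with h1 | h1 <;>
            rcases hd j₀ hj₀G with h2 | h2 <;> omega
  have key1 : x + (x - 1) * u ≤ (s' + 1) * n := by omega
  have hxC : x ≤ Nat.choose u s' := by
    by_contra hxC
    push_neg at hxC
    have chain : (s' + 1) * n < (s' + 1) * n := by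
      calc (s' + 1) * n ≤ (s' + 1) * Nat.choose (u + 1) (s' + 1) :=
            Nat.mul_le_mul_left _ hn
        _ = (u + 1) * Nat.choose u s' := by
            rw [mul_comm (s' + 1), ← Nat.add_one_mul_choose_eq u s']
        _ = u * Nat.choose u s' + Nat.choose u s' := by ring
        _ ≤ u * (x - 1) + Nat.choose u s' :=
            Nat.add_le_add_right (Nat.mul_le_mul_left u (by omega)) _
        _ < u * (x - 1) + x := by omega
        _ = (x - 1) * u + x := by ring
        _ ≤ (s' + 1) * n := by omega
    exact absurd chain (lt_irrefl _)
  have hxn : x ≤ n := by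
    by_contra hxn
    push_neg at hxn
    have chain : (s' + 1) * n < (s' + 1) * n := by
      calc (s' + 1) * n ≤ (u + 1) * n := Nat.mul_le_mul_right n hst
        _ = u * n + n := by ring
        _ ≤ u * (x - 1) + n := Nat.add_le_add_right (Nat.mul_le_mul_left u (by omega)) n
        _ < u * (x - 1) + x := by omega
        _ = (x - 1) * u + x := by ring
        _ ≤ (s' + 1) * n := by omega
    exact absurd chain (lt_irrefl _)
  obtain ⟨y, rfl⟩ : ∃ y, n = x + y := ⟨n - x, by omega⟩
  have hub : (s' + 1) * (x + y) ≤ (u + 1) * x := by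
    calc (s' + 1) * (x + y) = ∑ j ∈ G, d j := hsum.symm
      _ ≤ ∑ _j ∈ G, x := Finset.sum_le_sum (fun j hj => hj₀max j hj)
      _ = (u + 1) * x := by rw [Finset.sum_const, hG, smul_eq_mul]
  have hyD : y ≤ Nat.choose u (s' + 1) := by
    have h1 : (u + 1) * x + (u + 1) * y
        = (s' + 1) * (x + y) + (u - s') * (x + y) := by
      have hsplit : u + 1 = (s' + 1) + (u - s') := by omega
      calc (u + 1) * x + (u + 1) * y = (u + 1) * (x + y) := by ring
        _ = (s' + 1) * (x + y) + (u - s') * (x + y) := by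
            rw [hsplit, add_mul]
    have h2 : (u + 1) * y ≤ (u - s') * (x + y) := by omega
    have h3 : (u - s') * (x + y) ≤ (u - s') * Nat.choose (u + 1) (s' + 1) :=
      Nat.mul_le_mul_left _ hn
    have h4 : (u - s') * Nat.choose (u + 1) (s' + 1)
        = Nat.choose u (s' + 1) * (u + 1) := by
      have h5 := Nat.choose_mul_succ_eq u (s' + 1)
      rw [show u + 1 - (s' + 1) = u - s' by omega] at h5
      rw [mul_comm]
      exact h5.symm
    have h6 : y * (u + 1) ≤ Nat.choose u (s' + 1) * (u + 1) := by
      rw [mul_comm y]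
      omega
    exact Nat.le_of_mul_le_mul_right h6 (by omega)
  -- split the remaining degree vector
  have hd' : ∀ j ∈ G', d j = a ∨ d j = a + 1 := fun j hj => hd j (hG'sub hj)
  have hPQ : s' * x + (s' + 1) * y = ∑ j ∈ G', d j := by
    have hr : s' * x + (s' + 1) * y + x = (s' + 1) * (x + y) := by ring
    omega
  obtain ⟨e, f, hef, ⟨b, hb⟩, ⟨c, hc⟩, hesum, hfsum⟩ := lemB G' d a _ _ hd' hPQ
  obtain ⟨F₁, hF₁card, hF₁mem, hF₁deg⟩ :=
    IH u (by omega) G' hG'card s' x e b hxC hb hesum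
  obtain ⟨F₂, hF₂card, hF₂mem, hF₂deg⟩ :=
    IH u (by omega) G' hG'card (s' + 1) y f c hyD hc hfsum
  -- assemble
  have hj₀notin : ∀ S ∈ F₁, j₀ ∉ S := by
    intro S hS hjS
    have := (hF₁mem S hS).1 hjS
    rw [hG'] at this
    exact (Finset.mem_erase.mp this).1 rfl
  have hinj : Set.InjOn (insert j₀) (F₁ : Set (Finset ℕ)) := by
    intro S hS T hT hST
    have h1 : S = (insert j₀ S).erase j₀ :=
      (Finset.erase_insert (hj₀notin S hS)).symm
    rw [h1, hST, Finset.erase_insert (hj₀notin T hT)]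
  have hdisj : Disjoint (F₁.image (insert j₀)) F₂ := by
    refine Finset.disjoint_left.mpr ?_
    intro S hS hS2
    obtain ⟨T, hT, rfl⟩ := Finset.mem_image.mp hS
    have : j₀ ∈ T := by
      have h := (hF₂mem _ hS2).1 (Finset.mem_insert_self j₀ T)
      rw [hG'] at h
      exact absurd rfl (Finset.mem_erase.mp h).1
    exact hj₀notin T hT this
  refine ⟨F₁.image (insert j₀) ∪ F₂, ?_, ?_, ?_⟩
  · rw [Finset.card_union_of_disjoint hdisj, Finset.card_image_of_injOn hinj,
      hF₁card, hF₂card]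
  · intro S hS
    rcases Finset.mem_union.mp hS with hS1 | hS2
    · obtain ⟨T, hT, rfl⟩ := Finset.mem_image.mp hS1
      obtain ⟨hTsub, hTcard⟩ := hF₁mem T hT
      constructor
      · exact Finset.insert_subset hj₀G (hTsub.trans hG'sub)
      · rw [Finset.card_insert_of_notMem (hj₀notin T hT), hTcard]
    · obtain ⟨hTsub, hTcard⟩ := hF₂mem S hS2
      exact ⟨hTsub.trans hG'sub, hTcard⟩
  · intro j hj
    rw [Finset.filter_union,
      Finset.card_union_of_disjoint (Finset.disjoint_filter_filter hdisj)]
    by_cases hjj : j = j₀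
    · have h1 : (F₁.image (insert j₀)).filter (fun S => j ∈ S)
          = F₁.image (insert j₀) := by
        refine Finset.filter_true_of_mem ?_
        intro S hS
        obtain ⟨T, _, rfl⟩ := Finset.mem_image.mp hS
        rw [hjj]
        exact Finset.mem_insert_self _ _
      have h2 : F₂.filter (fun S => j ∈ S) = ∅ := by
        refine Finset.filter_false_of_mem ?_
        intro S hS hjS
        have h := (hF₂mem S hS).1 hjS
        rw [hG', hjj] at h
        exact (Finset.mem_erase.mp h).1 rfl
      rw [h1, h2, Finset.card_image_of_injOn hinj, hF₁card, Finset.card_empty]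
      rw [hjj, ← hx]
      omega
    · have hjG' : j ∈ G' := by rw [hG']; exact Finset.mem_erase.mpr ⟨hjj, hj⟩
      have h1 : (F₁.image (insert j₀)).filter (fun S => j ∈ S)
          = (F₁.filter (fun S => j ∈ S)).image (insert j₀) := by
        ext T
        simp only [Finset.mem_filter, Finset.mem_image]
        constructor
        · rintro ⟨⟨S, hS, rfl⟩, hjT⟩
          refine ⟨S, ⟨hS, ?_⟩, rfl⟩
          rcases Finset.mem_insert.mp hjT with h | h
          · exact absurd h hjj
          · exact h
        · rintro ⟨S, ⟨hS, hjS⟩, rfl⟩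
          exact ⟨⟨S, hS, rfl⟩, Finset.mem_insert_of_mem hjS⟩
      rw [h1, Finset.card_image_of_injOn
        (hinj.mono (by intro z hz; exact Finset.filter_subset _ _ hz)),
        hF₁deg j hjG', hF₂deg j hjG']
      exact hef j hjG'


lemma lemC (r : ℕ) : ∀ (w : ℕ) (G : Finset ℕ) (c : ℕ → ℕ),
    w ≤ G.card → (∀ j ∈ G, c j ≤ r) → (∑ j ∈ G, c j = r * w) →
    ∃ g : ℕ → Finset ℕ, (∀ i < r, g i ⊆ G ∧ (g i).card = w) ∧
      ∀ j ∈ G, ((Finset.range r).filter (fun i => j ∈ g i)).card = c j := by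
  induction r with
  | zero =>
    intro w G c _ _ hsum
    rw [zero_mul] at hsum
    exact ⟨fun _ => ∅, by omega, fun j hj => by
      simp [(Finset.sum_eq_zero_iff.mp hsum) j hj]⟩
  | succ r IH =>
    intro w G c hw hc hsum
    set A := G.filter (fun j => c j = r + 1) with hA
    set B := G.filter (fun j => 1 ≤ c j) with hB
    have hAB : A ⊆ B := by
      intro j hj
      rw [hA, Finset.mem_filter] at hj
      rw [hB, Finset.mem_filter]
      exact ⟨hj.1, by omega⟩
    have hBG : B ⊆ G := Finset.filter_subset _ _
    have hAG : A ⊆ G := Finset.filter_subset _ _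
    have hAcard : A.card ≤ w := by
      have h1 : (r + 1) * A.card ≤ (r + 1) * w := by
        calc (r + 1) * A.card = ∑ j ∈ A, c j := by
              rw [Finset.sum_congr rfl (fun j hj => (Finset.mem_filter.mp hj).2),
                Finset.sum_const, smul_eq_mul, mul_comm]
          _ ≤ ∑ j ∈ G, c j := Finset.sum_le_sum_of_subset hAG
          _ = (r + 1) * w := hsum
      exact Nat.le_of_mul_le_mul_left h1 (by omega)
    have hBcard : w ≤ B.card := by
      have h1 : (r + 1) * w ≤ (r + 1) * B.card := by
        calc (r + 1) * w = ∑ j ∈ G, c j := hsum.symm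
          _ = ∑ j ∈ B, c j := by
              refine (Finset.sum_subset hBG ?_).symm
              intro j hj hjB
              by_contra hne
              exact hjB (by rw [hB, Finset.mem_filter]; exact ⟨hj, by omega⟩)
          _ ≤ ∑ _j ∈ B, (r + 1) := Finset.sum_le_sum
              (fun j hj => hc j (hBG hj))
          _ = (r + 1) * B.card := by rw [Finset.sum_const, smul_eq_mul, mul_comm]
      exact Nat.le_of_mul_le_mul_left h1 (by omega)
    obtain ⟨T, hAT, hTB, hTcard⟩ :=
      Finset.exists_subsuperset_card_eq (n := w - A.card + A.card) hAB (by omega) (by omega)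
    have hTcard' : T.card = w := by rw [hTcard]; omega
    have hTG : T ⊆ G := hTB.trans hBG
    have hT1 : ∀ j ∈ T, 1 ≤ c j := by
      intro j hj
      exact (Finset.mem_filter.mp (hTB hj)).2
    set c' := fun j => c j - (if j ∈ T then 1 else 0) with hc'
    have hc'le : ∀ j ∈ G, c' j ≤ r := by
      intro j hj
      simp only [hc']
      by_cases hcj : c j = r + 1
      · have : j ∈ T := hAT (by rw [hA, Finset.mem_filter]; exact ⟨hj, hcj⟩)
        simp only [this, if_pos]
        omega
      · have := hc j hj
        split <;> omega
    have hc'sum : ∑ j ∈ G, c' j = r * w := by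
      have h1 : (∑ j ∈ G, c' j) + ∑ j ∈ G, (if j ∈ T then 1 else 0)
          = ∑ j ∈ G, c j := by
        rw [← Finset.sum_add_distrib]
        refine Finset.sum_congr rfl (fun j hj => ?_)
        simp only [hc']
        by_cases hjT : j ∈ T
        · have := hT1 j hjT
          simp only [hjT, if_pos]
          omega
        · simp [hjT]
      have h2 : ∑ j ∈ G, (if j ∈ T then 1 else 0) = T.card := by
        rw [← Finset.card_filter, Finset.filter_mem_eq_inter,
          Finset.inter_eq_right.mpr hTG]
      rw [h2, hsum, hTcard'] at h1
      have hr : (r + 1) * w = r * w + w := by ring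
      omega
    obtain ⟨g', hg'mem, hg'deg⟩ := IH w G c' hw hc'le hc'sum
    refine ⟨fun i => if i = r then T else g' i, ?_, ?_⟩
    · intro i hi
      by_cases hir : i = r
      · simp only [hir, if_pos]
        exact ⟨hTG, hTcard'⟩
      · simp only [hir, if_neg, if_false]
        exact hg'mem i (by omega)
    · intro j hj
      rw [Finset.range_add_one, Finset.filter_insert]
      have hfilter : (Finset.range r).filter (fun i => j ∈ if i = r then T else g' i)
          = (Finset.range r).filter (fun i => j ∈ g' i) := by
        refine Finset.filter_congr (fun i hi => ?_)
        rw [Finset.mem_range] at hi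
        simp [Nat.ne_of_lt hi]
      by_cases hjT : j ∈ T
      · rw [if_pos (by simp [hjT])]
        rw [Finset.card_insert_of_notMem (by simp), hfilter, hg'deg j hj]; simp only [hc']
        have := hT1 j hjT
        simp only [hjT, if_pos]
        omega
      · rw [if_neg (by simp [hjT])]
        rw [hfilter, hg'deg j hj]; simp only [hc']
        simp [hjT]

lemma card_filter_fin (k : ℕ) (p : ℕ → Prop) [DecidablePred p] :
    (Finset.univ.filter (fun i : Fin k => p (i : ℕ))).card
      = ((Finset.range k).filter p).card := by
  refine Finset.card_bij (fun i _ => (i : ℕ)) ?_ ?_ ?_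
  · intro i hi
    rw [Finset.mem_filter] at hi ⊢
    exact ⟨Finset.mem_range.mpr i.isLt, hi.2⟩
  · intro i _ i' _ h
    exact Fin.val_injective h
  · intro j hj
    rw [Finset.mem_filter, Finset.mem_range] at hj
    exact ⟨⟨j, hj.1⟩, Finset.mem_filter.mpr ⟨Finset.mem_univ _, hj.2⟩, rfl⟩

lemma card_supp (t : ℕ) (R : Finset ℕ) (hR : R ⊆ Finset.range t) :
    (Finset.univ.filter (fun j : Fin t => (j : ℕ) ∈ R)).card = R.card := by
  rw [card_filter_fin t (fun j => j ∈ R), Finset.filter_mem_eq_inter, Finset.inter_eq_right.mpr hR]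

lemma supp_inj (t : ℕ) (R₁ R₂ : Finset ℕ) (h₁ : R₁ ⊆ Finset.range t)
    (h₂ : R₂ ⊆ Finset.range t)
    (h : Finset.univ.filter (fun j : Fin t => (j : ℕ) ∈ R₁)
       = Finset.univ.filter (fun j : Fin t => (j : ℕ) ∈ R₂)) : R₁ = R₂ := by
  ext j
  constructor <;> intro hj
  · have hjt : j < t := Finset.mem_range.mp (h₁ hj)
    have h2 : (⟨j, hjt⟩ : Fin t) ∈ Finset.univ.filter (fun j : Fin t => (j : ℕ) ∈ R₁) :=
      Finset.mem_filter.mpr ⟨Finset.mem_univ _, hj⟩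
    rw [h] at h2
    exact (Finset.mem_filter.mp h2).2
  · have hjt : j < t := Finset.mem_range.mp (h₂ hj)
    have h2 : (⟨j, hjt⟩ : Fin t) ∈ Finset.univ.filter (fun j : Fin t => (j : ℕ) ∈ R₂) :=
      Finset.mem_filter.mpr ⟨Finset.mem_univ _, hj⟩
    rw [← h] at h2
    exact (Finset.mem_filter.mp h2).2

def rowSupp {k t : ℕ} (M : Fin k → Fin t → Bool) (i : Fin k) : Finset (Fin t) :=
  Finset.univ.filter (fun j => M i j)

def colSupp {k t : ℕ} (M : Fin k → Fin t → Bool) (j : Fin t) : Finset (Fin k) :=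
  Finset.univ.filter (fun i => M i j)

noncomputable def wmin {k t : ℕ} (M : Fin k → Fin t → Bool) : ℕ :=
  sInf {w | ∃ i : Fin k, w = (rowSupp M i).card}

/-- `Γ(M)`: the maximum repetition number among rows of minimum weight. -/
noncomputable def Gamma {k t : ℕ} (M : Fin k → Fin t → Bool) : ℕ :=
  Finset.univ.sup (fun i : Fin k =>
    if (rowSupp M i).card = wmin M then
      (Finset.univ.filter (fun i' => rowSupp M i' = rowSupp M i)).card
    else 0)

/-- If `tα = sk + r` with `s ≥ 1`, `0 ≤ r ≤ k-1` (where `α ≤ k`), and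
`k - r ≤ C(t,s)`, then there exists a `k × t` binary matrix `M₀` such that
(i) each column of `M₀` has exactly `α` ones, (ii) `w_min(M₀) = s`, and
(iii) `Γ(M₀) = 1`, i.e. no two rows of minimum weight `s` share a support
with any other row. -/
theorem stmt4 {k t α s r : ℕ} (hs : 1 ≤ s) (hr : r < k) (hαk : α ≤ k)
    (heq : t * α = s * k + r) (hsmall : k - r ≤ Nat.choose t s) :
    ∃ M : Fin k → Fin t → Bool,
      (∀ j, (colSupp M j).card = α) ∧ wmin M = s ∧ Gamma M = 1 := by
  have hk0 : 0 < k := by omega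
  have hsk : 1 ≤ s * k := Nat.mul_pos hs hk0
  have ht : 1 ≤ t := by
    rcases Nat.eq_zero_or_pos t with h | h
    · subst h; rw [zero_mul] at heq; omega
    · exact h
  have hα : 1 ≤ α := by
    rcases Nat.eq_zero_or_pos α with h | h
    · subst h; rw [mul_zero] at heq; omega
    · exact h
  set n := k - r with hn
  have hn1 : 1 ≤ n := by omega
  have hnr : n + r = k := by omega
  set N := s * n with hN
  have hNsum : N + s * r = s * k := by
    calc N + s * r = s * (n + r) := by rw [hN]; ring
      _ = s * k := by rw [hnr]
  set a0 := N / t with ha0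
  set hi0 := N % t with hhi0def
  have hdm : a0 * t + hi0 = N := by
    rw [ha0, hhi0def, mul_comm]; exact Nat.div_add_mod N t
  have hhi0 : hi0 < t := by rw [hhi0def]; exact Nat.mod_lt _ ht
  set d : ℕ → ℕ := fun j => if j < hi0 then a0 + 1 else a0 with hd
  have hdval : ∀ j, d j = a0 ∨ d j = a0 + 1 := by
    intro j; simp only [hd]; split
    · right; rfl
    · left; rfl
  have hdsum : ∑ j ∈ Finset.range t, d j = s * n := by
    calc ∑ j ∈ Finset.range t, d j
        = ∑ j ∈ Finset.range t, (a0 + if j < hi0 then 1 else 0) := by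
          refine Finset.sum_congr rfl (fun j _ => ?_)
          simp only [hd]; split <;> omega
      _ = (∑ _j ∈ Finset.range t, a0)
          + ∑ j ∈ Finset.range t, (if j < hi0 then 1 else 0) :=
          Finset.sum_add_distrib
      _ = a0 * t + hi0 := by
          have hflt : (Finset.range t).filter (fun j => j < hi0) = Finset.range hi0 := by
            ext j
            simp only [Finset.mem_filter, Finset.mem_range]
            omega
          rw [Finset.sum_const, Finset.card_range, smul_eq_mul, mul_comm,
            ← Finset.card_filter, hflt, Finset.card_range]
      _ = s * n := by rw [hdm, hN]
  have hst1 : 1 ≤ r → s + 1 ≤ t := by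
    intro hr1
    have h1 : t * α ≤ t * k := Nat.mul_le_mul_left t hαk
    have h2 : s * k < t * k := by omega
    have h3 : s < t := by
      rcases Nat.lt_or_ge s t with h | h
      · exact h
      · exfalso
        have := Nat.mul_le_mul_right k h
        omega
    omega
  have hbounds : ∀ j, d j ≤ α ∧ α ≤ d j + r := by
    rcases Nat.eq_zero_or_pos r with hr0 | hr1
    · have hsr0 : s * r = 0 := by rw [hr0, mul_zero]
      have hNt : N = t * α := by omega
      have ha0α : a0 = α := by
        rw [ha0, hNt, Nat.mul_div_cancel_left _ (by omega : 0 < t)]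
      have hhi00 : hi0 = 0 := by
        rw [hhi0def, hNt, Nat.mul_mod_right]
      intro j
      simp only [hd, hhi00]
      have : ¬ (j < 0) := by omega
      rw [if_neg this]
      omega
    · have hup : a0 + 1 ≤ α := by
        have hsr1 : 1 ≤ s * r := Nat.mul_pos hs hr1
        have hlt : N < t * α := by omega
        have := Nat.div_lt_of_lt_mul hlt
        omega
      have hlow : α ≤ a0 + r := by
        have hstt : s + 1 ≤ t := hst1 hr1
        have e1 : (s + 1) * r = s * r + r := by ring
        have e2 : (s + 1) * r ≤ t * r := Nat.mul_le_mul_right r hstt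
        have h3 : α * t ≤ N + r * t := by
          have e3 : α * t = t * α := by ring
          have e4 : r * t = t * r := by ring
          omega
        have h4 : α ≤ (N + r * t) / t := (Nat.le_div_iff_mul_le (by omega)).mpr h3
        rw [Nat.add_mul_div_right N r (by omega : 0 < t)] at h4
        omega
      intro j
      rcases hdval j with h | h <;> omega
  obtain ⟨F, hFcard, hFmem, hFdeg⟩ :=
    lemA t (Finset.range t) (Finset.card_range t) s n d a0 hsmall
      (fun j _ => hdval j) hdsum
  set c : ℕ → ℕ := fun j => α - d j with hc
  have hcd : ∀ j, c j + d j = α := by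
    intro j; simp only [hc]; have := (hbounds j).1; omega
  have hcsum : ∑ j ∈ Finset.range t, c j = r * (s + 1) := by
    have h1 : (∑ j ∈ Finset.range t, c j) + ∑ j ∈ Finset.range t, d j
        = t * α := by
      rw [← Finset.sum_add_distrib]
      calc ∑ j ∈ Finset.range t, (c j + d j) = ∑ _j ∈ Finset.range t, α :=
            Finset.sum_congr rfl (fun j _ => hcd j)
        _ = t * α := by rw [Finset.sum_const, Finset.card_range, smul_eq_mul]
    rw [hdsum] at h1
    have e : r * (s + 1) = s * r + r := by ring
    omega
  have hg : ∃ g : ℕ → Finset ℕ,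
      (∀ i < r, g i ⊆ Finset.range t ∧ (g i).card = s + 1) ∧
      ∀ j ∈ Finset.range t, ((Finset.range r).filter (fun i => j ∈ g i)).card = c j := by
    rcases Nat.eq_zero_or_pos r with hr0 | hr1
    · refine ⟨fun _ => ∅, by omega, fun j hj => ?_⟩
      simp only [hr0, Finset.range_zero, Finset.filter_empty, Finset.card_empty, hc]
      have h1 := (hbounds j).1
      have h2 := (hbounds j).2
      omega
    · exact lemC r (s + 1) (Finset.range t) c
        (by rw [Finset.card_range]; exact hst1 hr1)
        (fun j _ => by have := (hbounds j).2; simp only [hc]; omega) hcsum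
  obtain ⟨g, hgmem, hgdeg⟩ := hg
  -- enumeration of F
  have hFenum : ∃ Fl : ℕ → Finset ℕ, (∀ i < n, Fl i ∈ F) ∧
      (∀ i₁ < n, ∀ i₂ < n, Fl i₁ = Fl i₂ → i₁ = i₂) ∧
      (∀ S ∈ F, ∃ i < n, Fl i = S) := by
    have e := F.equivFin
    refine ⟨fun i => if h : i < F.card then (e.symm ⟨i, h⟩ : Finset ℕ) else ∅,
      ?_, ?_, ?_⟩
    · intro i hi
      beta_reduce
      rw [dif_pos (by omega : i < F.card)]
      exact (e.symm _).2
    · intro i₁ h₁ i₂ h₂ hFl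
      beta_reduce at hFl
      rw [dif_pos (by omega : i₁ < F.card), dif_pos (by omega : i₂ < F.card)] at hFl
      have h3 : e.symm ⟨i₁, by omega⟩ = e.symm ⟨i₂, by omega⟩ := Subtype.ext hFl
      have h4 := e.symm.injective h3
      exact congrArg Fin.val h4
    · intro S hS
      refine ⟨(e ⟨S, hS⟩ : Fin F.card), by have := (e ⟨S, hS⟩).isLt; omega, ?_⟩
      beta_reduce
      rw [dif_pos (by have := (e ⟨S, hS⟩).isLt; omega : ((e ⟨S, hS⟩ : Fin F.card) : ℕ) < F.card)]
      simp
  obtain ⟨Fl, hFl1, hFl2, hFl3⟩ := hFenum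
  set rows : ℕ → Finset ℕ := fun i => if i < n then Fl i else g (i - n) with hrows
  have hrsub : ∀ i < k, rows i ⊆ Finset.range t := by
    intro i hi
    simp only [hrows]
    split
    · exact (hFmem _ (hFl1 i (by assumption))).1
    · exact (hgmem (i - n) (by omega)).1
  have hrcard : ∀ i < k, (rows i).card = if i < n then s else s + 1 := by
    intro i hi
    simp only [hrows]
    split
    · exact (hFmem _ (hFl1 i (by assumption))).2
    · exact (hgmem (i - n) (by omega)).2
  have hrinj : ∀ i₁ < n, ∀ i₂ < n, rows i₁ = rows i₂ → i₁ = i₂ := by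
    intro i₁ h₁ i₂ h₂ hrr
    simp only [hrows, if_pos h₁, if_pos h₂] at hrr
    exact hFl2 i₁ h₁ i₂ h₂ hrr
  have hcolcount : ∀ j < t, ((Finset.range k).filter (fun i => j ∈ rows i)).card = α := by
    intro j hj
    have hsplit : Finset.range k = Finset.range n ∪ Finset.Ico n k := by
      ext i
      simp only [Finset.mem_union, Finset.mem_range, Finset.mem_Ico]
      omega
    have hdisj : Disjoint ((Finset.range n).filter (fun i => j ∈ rows i))
        ((Finset.Ico n k).filter (fun i => j ∈ rows i)) := by
      refine Finset.disjoint_filter_filter ?_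
      rw [Finset.disjoint_left]
      intro i hi1 hi2
      rw [Finset.mem_range] at hi1
      rw [Finset.mem_Ico] at hi2
      omega
    rw [hsplit, Finset.filter_union, Finset.card_union_of_disjoint hdisj]
    have hcount1 : ((Finset.range n).filter (fun i => j ∈ rows i)).card
        = (F.filter (fun S => j ∈ S)).card := by
      refine Finset.card_bij (fun i _ => rows i) ?_ ?_ ?_
      · intro i hi
        beta_reduce
        rw [Finset.mem_filter, Finset.mem_range] at hi
        rw [Finset.mem_filter]
        refine ⟨?_, hi.2⟩
        have : rows i = Fl i := by simp only [hrows, if_pos hi.1]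
        rw [this]
        exact hFl1 i hi.1
      · intro i₁ hi₁ i₂ hi₂ hrr
        beta_reduce at hrr
        rw [Finset.mem_filter, Finset.mem_range] at hi₁ hi₂
        exact hrinj i₁ hi₁.1 i₂ hi₂.1 hrr
      · intro S hS
        rw [Finset.mem_filter] at hS
        obtain ⟨i, hi, hFli⟩ := hFl3 S hS.1
        have hfi : rows i = Fl i := by simp only [hrows, if_pos hi]
        have hmem : i ∈ (Finset.range n).filter (fun i => j ∈ rows i) := by
          rw [Finset.mem_filter, Finset.mem_range]
          refine ⟨hi, ?_⟩
          rw [hfi, hFli]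
          exact hS.2
        refine ⟨i, hmem, ?_⟩
        beta_reduce
        rw [hfi, hFli]
    have hcount2 : ((Finset.Ico n k).filter (fun i => j ∈ rows i)).card
        = ((Finset.range r).filter (fun i' => j ∈ g i')).card := by
      refine Finset.card_bij (fun i _ => i - n) ?_ ?_ ?_
      · intro i hi
        beta_reduce
        rw [Finset.mem_filter, Finset.mem_Ico] at hi
        rw [Finset.mem_filter, Finset.mem_range]
        have hrw : rows i = g (i - n) := by
          simp only [hrows, if_neg (by omega : ¬ i < n)]
        refine ⟨by omega, ?_⟩
        rw [← hrw]; exact hi.2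
      · intro i₁ hi₁ i₂ hi₂ hrr
        beta_reduce at hrr
        rw [Finset.mem_filter, Finset.mem_Ico] at hi₁ hi₂
        omega
      · intro i' hi'
        rw [Finset.mem_filter, Finset.mem_range] at hi'
        refine ⟨n + i', ?_, by beta_reduce; omega⟩
        rw [Finset.mem_filter, Finset.mem_Ico]
        have hrw : rows (n + i') = g i' := by
          simp only [hrows, if_neg (by omega : ¬ n + i' < n)]
          congr 1
          omega
        refine ⟨by omega, ?_⟩
        rw [hrw]; exact hi'.2
    rw [hcount1, hcount2, hFdeg j (Finset.mem_range.mpr hj),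
      hgdeg j (Finset.mem_range.mpr hj)]
    exact by have := hcd j; omega
  -- the matrix
  set M0 : Fin k → Fin t → Bool := fun i j => decide ((j : ℕ) ∈ rows (i : ℕ)) with hM0
  have hsupp : ∀ i : Fin k,
      rowSupp M0 i = Finset.univ.filter (fun j : Fin t => (j : ℕ) ∈ rows (i : ℕ)) := by
    intro i
    unfold rowSupp
    ext j
    simp [hM0]
  have hsuppcard : ∀ i : Fin k, (rowSupp M0 i).card = (rows (i : ℕ)).card := by
    intro i
    rw [hsupp i, card_supp t _ (hrsub _ i.isLt)]
  have hwvals : ∀ i : Fin k, (rowSupp M0 i).card = if (i : ℕ) < n then s else s + 1 := by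
    intro i
    rw [hsuppcard i]
    exact hrcard _ i.isLt
  set i₀ : Fin k := ⟨0, hk0⟩ with hi₀def
  have hi₀ : (rowSupp M0 i₀).card = s := by
    rw [hwvals i₀]
    have : (i₀ : ℕ) < n := by rw [hi₀def]; exact hn1
    rw [if_pos this]
  have hwmin : wmin M0 = s := by
    unfold wmin
    have hmem : s ∈ {w | ∃ i : Fin k, w = (rowSupp M0 i).card} := ⟨i₀, hi₀.symm⟩
    have hle := Nat.sInf_le hmem
    obtain ⟨i, hi⟩ := Nat.sInf_mem (⟨s, hmem⟩ :
      Set.Nonempty {w | ∃ i : Fin k, w = (rowSupp M0 i).card})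
    have hv := hwvals i
    by_cases h : (i : ℕ) < n
    · rw [if_pos h] at hv; omega
    · rw [if_neg h] at hv; omega
  have hfeq : ∀ i : Fin k, (i : ℕ) < n →
      (Finset.univ.filter (fun i' => rowSupp M0 i' = rowSupp M0 i)) = {i} := by
    intro i hi
    ext i'
    simp only [Finset.mem_filter, Finset.mem_univ, true_and, Finset.mem_singleton]
    constructor
    · intro h
      by_cases h' : (i' : ℕ) < n
      · have hRR : rows (i' : ℕ) = rows (i : ℕ) := by
          refine supp_inj t _ _ (hrsub _ i'.isLt) (hrsub _ i.isLt) ?_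
          rw [← hsupp, ← hsupp]
          exact h
        exact Fin.val_injective (hrinj _ h' _ hi hRR)
      · exfalso
        have h1 := hwvals i'
        have h2 := hwvals i
        rw [if_neg h'] at h1
        rw [if_pos hi] at h2
        rw [h] at h1
        omega
    · rintro rfl; rfl
  refine ⟨M0, ?_, hwmin, ?_⟩
  · intro j
    have h1 : colSupp M0 j = Finset.univ.filter (fun i : Fin k => ((j : ℕ) ∈ rows (i : ℕ))) := by
      unfold colSupp
      ext i
      simp [hM0]
    rw [h1, card_filter_fin k (fun i' => (j : ℕ) ∈ rows i'), hcolcount _ j.isLt]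
  · unfold Gamma
    simp only [hwmin]
    apply le_antisymm
    · apply Finset.sup_le
      intro i _
      by_cases hcs : (rowSupp M0 i).card = s
      · rw [if_pos hcs]
        have hilt : (i : ℕ) < n := by
          have hv := hwvals i
          by_cases h : (i : ℕ) < n
          · exact h
          · rw [if_neg h] at hv; omega
        rw [hfeq i hilt, Finset.card_singleton]
      · rw [if_neg hcs]
        omega
    · have hval : (if (rowSupp M0 i₀).card = s then
          (Finset.univ.filter (fun i' => rowSupp M0 i' = rowSupp M0 i₀)).card else 0) = 1 := by
        rw [if_pos hi₀, hfeq i₀ (by rw [hi₀def]; exact hn1 : (i₀ : ℕ) < n),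
          Finset.card_singleton]
      rw [← hval]
      exact Finset.le_sup (f := fun i : Fin k =>
        if (rowSupp M0 i).card = s then
          (Finset.univ.filter (fun i' => rowSupp M0 i' = rowSupp M0 i)).card
        else 0) (Finset.mem_univ i₀)
end

section
/- Let G be a bipartite graph with parts U and V, |U| = |V| = k, and let X be its k×k Edmonds matrix (with independent indeterminates x_{i,j} at edge positions and 0 elsewhere). Then G has a perfect matching if and only if det(X) is not the zero polynomial. -/
/-- The Edmonds matrix of a bipartite graph on `[k] × [k]` given by the edge
relation `E`: the entry at `(i,j)` is the indeterminate `x_{i,j}` if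
`(u_i, v_j)` is an edge and `0` otherwise. -/
noncomputable def edmondsMatrix {k : ℕ} (E : Fin k → Fin k → Bool) :
    Matrix (Fin k) (Fin k) (MvPolynomial (Fin k × Fin k) ℤ) :=
  fun i j => if E i j then MvPolynomial.X (i, j) else 0

/-- The exponent vector of the monomial `∏ i, x_{τ i, i}`. -/
noncomputable def permMonomial {k : ℕ} (τ : Equiv.Perm (Fin k)) :
    (Fin k × Fin k) →₀ ℕ :=
  ∑ i, Finsupp.single ((τ i, i) : Fin k × Fin k) 1

lemma permMonomial_apply {k : ℕ} (τ : Equiv.Perm (Fin k)) (a b : Fin k) :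
    permMonomial τ (b, a) = if τ a = b then 1 else 0 := by
  rw [permMonomial, Finsupp.finset_sum_apply, Finset.sum_eq_single a]
  · simp [Finsupp.single_apply, Prod.ext_iff]
  · intro i _ hi
    exact Finsupp.single_eq_of_ne' (fun he => hi (congrArg Prod.snd he))
  · simp

lemma permMonomial_injective {k : ℕ} :
    Function.Injective (permMonomial (k := k)) := by
  intro π τ h
  ext a
  have h1 : permMonomial π (π a, a) = permMonomial τ (π a, a) := DFunLike.congr_fun h _
  rw [permMonomial_apply, permMonomial_apply] at h1
  by_contra hne
  rw [if_pos rfl, if_neg (fun he => hne (congrArg _ he.symm))] at h1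
  exact one_ne_zero h1

lemma prod_edmonds {k : ℕ} (E : Fin k → Fin k → Bool) (π : Equiv.Perm (Fin k))
    (h : ∀ i, E (π i) i = true) :
    (∏ i, edmondsMatrix E (π i) i) = MvPolynomial.monomial (permMonomial π) 1 := by
  rw [permMonomial, MvPolynomial.monomial_sum_one]
  refine Finset.prod_congr rfl fun i _ => ?_
  simp [edmondsMatrix, h i, MvPolynomial.X]

/-- A bipartite graph with parts of equal size `k` has a perfect matching if
and only if the determinant of its Edmonds matrix is not the zero
polynomial. -/
theorem stmt9 {k : ℕ} (E : Fin k → Fin k → Bool) :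
    (∃ σ : Equiv.Perm (Fin k), ∀ i, E i (σ i) = true) ↔
      (edmondsMatrix E).det ≠ 0 := by
  constructor
  · rintro ⟨σ, hσ⟩ h0
    set τ : Equiv.Perm (Fin k) := σ⁻¹ with hτ
    have hτE : ∀ i, E (τ i) i = true := by
      intro i
      have := hσ (τ i)
      rwa [hτ, ← Equiv.Perm.mul_apply, mul_inv_cancel, Equiv.Perm.one_apply] at this
    have hc : MvPolynomial.coeff (permMonomial τ) (edmondsMatrix E).det
        = Equiv.Perm.sign τ := by
      rw [Matrix.det_apply, MvPolynomial.coeff_sum]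
      rw [Finset.sum_eq_single τ]
      · rw [prod_edmonds E τ hτE]
        rw [MvPolynomial.coeff_smul, MvPolynomial.coeff_monomial, if_pos rfl,
          Units.smul_def, smul_eq_mul, mul_one]
      · intro π _ hπ
        by_cases hE : ∀ i, E (π i) i = true
        · rw [prod_edmonds E π hE]
          rw [MvPolynomial.coeff_smul, MvPolynomial.coeff_monomial,
            if_neg (fun he => hπ (permMonomial_injective he)), smul_zero]
        · push_neg at hE
          obtain ⟨i, hi⟩ := hE
          have : (∏ j, edmondsMatrix E (π j) j) = 0 := by
            refine Finset.prod_eq_zero (Finset.mem_univ i) ?_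
            simp [edmondsMatrix, hi]
          rw [this, smul_zero, MvPolynomial.coeff_zero]
      · simp
    rw [h0, MvPolynomial.coeff_zero] at hc
    exact Units.ne_zero _ hc.symm
  · intro hdet
    by_contra hns
    push_neg at hns
    apply hdet
    rw [Matrix.det_apply]
    refine Finset.sum_eq_zero fun π _ => ?_
    obtain ⟨i, hi⟩ := hns π⁻¹
    have : (∏ j, edmondsMatrix E (π j) j) = 0 := by
      refine Finset.prod_eq_zero (Finset.mem_univ (π⁻¹ i)) ?_
      rw [← Equiv.Perm.mul_apply, mul_inv_cancel, Equiv.Perm.one_apply]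
      simpa [edmondsMatrix] using hi
    rw [this, smul_zero]
end

section
/- Let M0 be a k×t binary matrix with no zero row, let i_0 = t − w_min(M0), and for i ∈ [t] define ξ(i) = min over J ⊆ [t] with |J| = i of |⋃_{j∈J} C_{M0}(j)|. Then ξ(i_0) = k − Γ(M0) and ξ(i) = k for all i with i_0 + 1 ≤ i ≤ t. -/
/-- `ξ(i)`: the minimum, over all sets `J` of `i` columns, of the size of the
union of the column supports indexed by `J`. -/
noncomputable def xi {k t : ℕ} (M : Fin k → Fin t → Bool) (i : ℕ) : ℕ :=
  sInf {c | ∃ J : Finset (Fin t), J.card = i ∧ c = (J.biUnion (colSupp M)).card}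

section Aux

variable {k t : ℕ}

lemma biUnion_eq (M : Fin k → Fin t → Bool) (J : Finset (Fin t)) :
    J.biUnion (colSupp M) = Finset.univ.filter (fun i => ∃ j ∈ J, M i j) := by
  ext i
  simp [colSupp, Finset.mem_biUnion]

lemma wmin_le (M : Fin k → Fin t → Bool) (i : Fin k) : wmin M ≤ (rowSupp M i).card :=
  Nat.sInf_le ⟨i, rfl⟩

lemma wmin_spec (hk : 0 < k) (M : Fin k → Fin t → Bool) :
    ∃ i : Fin k, (rowSupp M i).card = wmin M := by
  obtain ⟨i, hi⟩ := Nat.sInf_mem (⟨(rowSupp M ⟨0, hk⟩).card, ⟨0, hk⟩, rfl⟩ :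
    Set.Nonempty {w | ∃ i : Fin k, w = (rowSupp M i).card})
  exact ⟨i, hi.symm⟩

lemma wmin_le_t (hk : 0 < k) (M : Fin k → Fin t → Bool) : wmin M ≤ t := by
  obtain ⟨i, hi⟩ := wmin_spec hk M
  rw [← hi]
  simpa using Finset.card_le_univ (rowSupp M i)

lemma covered (hk : 0 < k) (M : Fin k → Fin t → Bool) (i : Fin k) (J : Finset (Fin t))
    (hJ : t - wmin M + 1 ≤ J.card) : ∃ j ∈ J, M i j := by
  have h1 : wmin M ≤ (rowSupp M i).card := wmin_le M i
  have h2 : wmin M ≤ t := wmin_le_t hk M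
  have hcap : 0 < ((rowSupp M i) ∩ J).card := by
    have h3 := Finset.card_inter_add_card_union (rowSupp M i) J
    have hu : ((rowSupp M i) ∪ J).card ≤ t := by
      simpa using Finset.card_le_univ ((rowSupp M i) ∪ J)
    omega
  obtain ⟨j, hj⟩ := Finset.card_pos.mp hcap
  rw [Finset.mem_inter] at hj
  exact ⟨j, hj.2, by simpa [rowSupp] using hj.1⟩

lemma union_card (M : Fin k → Fin t → Bool) (J : Finset (Fin t)) :
    (J.biUnion (colSupp M)).card
      = k - (Finset.univ.filter (fun i => ¬ ∃ j ∈ J, M i j)).card := by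
  rw [biUnion_eq]
  have h := Finset.card_filter_add_card_filter_not
    (s := (Finset.univ : Finset (Fin k))) (p := fun i => ∃ j ∈ J, M i j)
  simp only [Finset.card_univ, Fintype.card_fin] at h
  omega

lemma missed_eq (hk : 0 < k) (M : Fin k → Fin t → Bool) (J : Finset (Fin t))
    (hJ : J.card = t - wmin M) :
    Finset.univ.filter (fun i => ¬ ∃ j ∈ J, M i j)
      = Finset.univ.filter (fun i => rowSupp M i = Jᶜ) := by
  have hwt : wmin M ≤ t := wmin_le_t hk M
  have hc : Jᶜ.card = wmin M := by
    rw [Finset.card_compl, hJ]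
    simp
    omega
  ext i
  simp only [Finset.mem_filter, Finset.mem_univ, true_and]
  constructor
  · intro h
    have hsub : rowSupp M i ⊆ Jᶜ := by
      intro j hj
      rw [Finset.mem_compl]
      intro hjJ
      exact h ⟨j, hjJ, by simpa [rowSupp] using hj⟩
    exact Finset.eq_of_subset_of_card_le hsub (by rw [hc]; exact wmin_le M i)
  · rintro h ⟨j, hjJ, hMij⟩
    have hmem : j ∈ rowSupp M i := by simp [rowSupp, hMij]
    rw [h, Finset.mem_compl] at hmem
    exact hmem hjJ

lemma count_le_Gamma (hk : 0 < k) (M : Fin k → Fin t → Bool) (J : Finset (Fin t))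
    (hJ : J.card = t - wmin M) :
    (Finset.univ.filter (fun i => rowSupp M i = Jᶜ)).card ≤ Gamma M := by
  have hwt : wmin M ≤ t := wmin_le_t hk M
  rcases Finset.eq_empty_or_nonempty
      (Finset.univ.filter (fun i => rowSupp M i = Jᶜ)) with h | ⟨i, hi⟩
  · simp [h]
  · rw [Finset.mem_filter] at hi
    have hcard : (rowSupp M i).card = wmin M := by
      rw [hi.2, Finset.card_compl, hJ]
      simp
      omega
    have hle := Finset.le_sup (f := fun i : Fin k =>
      if (rowSupp M i).card = wmin M then
        (Finset.univ.filter (fun i' => rowSupp M i' = rowSupp M i)).card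
      else 0) (Finset.mem_univ i)
    rw [if_pos hcard, hi.2] at hle
    exact hle

lemma exists_Gamma (hk : 0 < k) (M : Fin k → Fin t → Bool) :
    ∃ i : Fin k, (rowSupp M i).card = wmin M ∧
      (Finset.univ.filter (fun i' => rowSupp M i' = rowSupp M i)).card = Gamma M := by
  set f := fun i : Fin k =>
    if (rowSupp M i).card = wmin M then
      (Finset.univ.filter (fun i' => rowSupp M i' = rowSupp M i)).card
    else 0 with hf
  obtain ⟨im, him⟩ := wmin_spec hk M
  have hpos : 1 ≤ Gamma M := by
    have hle := Finset.le_sup (f := f) (Finset.mem_univ im)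
    rw [hf] at hle
    simp only [if_pos him] at hle
    have h1 : 1 ≤ (Finset.univ.filter (fun i' => rowSupp M i' = rowSupp M im)).card :=
      Finset.card_pos.mpr ⟨im, by simp⟩
    exact le_trans h1 hle
  obtain ⟨i, _, hi⟩ := Finset.exists_mem_eq_sup Finset.univ ⟨im, Finset.mem_univ im⟩ f
  by_cases hc : (rowSupp M i).card = wmin M
  · refine ⟨i, hc, ?_⟩
    rw [show Gamma M = f i from hi, hf]
    simp [if_pos hc]
  · exfalso
    have : Gamma M = 0 := by rw [show Gamma M = f i from hi, hf]; simp [if_neg hc]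
    omega

end Aux

/-- For a `k × t` binary matrix `M₀` with no zero row and `i₀ = t - w_min(M₀)`,
we have `ξ(i₀) = k - Γ(M₀)` and `ξ(i) = k` for all `i₀ + 1 ≤ i ≤ t`. -/
theorem stmt11 {k t : ℕ} (hk : 0 < k) (M : Fin k → Fin t → Bool)
    (hrow : ∀ i, (rowSupp M i).Nonempty) :
    xi M (t - wmin M) = k - Gamma M ∧
    ∀ i : ℕ, t - wmin M + 1 ≤ i → i ≤ t → xi M i = k := by
  have hwt : wmin M ≤ t := wmin_le_t hk M
  constructor
  · -- ξ(i₀) = k - Γ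
    obtain ⟨is, hiscard, hiscnt⟩ := exists_Gamma hk M
    have hmem : (k - Gamma M) ∈
        {c | ∃ J : Finset (Fin t), J.card = t - wmin M ∧ c = (J.biUnion (colSupp M)).card} := by
      refine ⟨(rowSupp M is)ᶜ, ?_, ?_⟩
      · rw [Finset.card_compl, hiscard]; simp
      · rw [union_card, missed_eq hk M _ (by rw [Finset.card_compl, hiscard]; simp),
          compl_compl, hiscnt]
    have hlb : ∀ c ∈ {c | ∃ J : Finset (Fin t),
        J.card = t - wmin M ∧ c = (J.biUnion (colSupp M)).card}, k - Gamma M ≤ c := by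
      rintro c ⟨J, hJ, rfl⟩
      rw [union_card, missed_eq hk M J hJ]
      exact Nat.sub_le_sub_left (count_le_Gamma hk M J hJ) k
    exact le_antisymm (Nat.sInf_le hmem) (le_csInf ⟨_, hmem⟩ hlb)
  · intro i h1 h2
    obtain ⟨J, _, hJc⟩ := Finset.exists_subset_card_eq
      (le_trans h2 (by simp : t ≤ (Finset.univ : Finset (Fin t)).card))
    have hfull : ∀ J' : Finset (Fin t), J'.card = i → (J'.biUnion (colSupp M)).card = k := by
      intro J' hJ'
      rw [union_card]
      have : Finset.univ.filter (fun i' => ¬ ∃ j ∈ J', M i' j) = ∅ := by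
        rw [Finset.filter_eq_empty_iff]
        intro i' _
        simpa using covered hk M i' J' (by omega)
      rw [this]
      simp
    have hmem : k ∈ {c | ∃ J' : Finset (Fin t), J'.card = i ∧ c = (J'.biUnion (colSupp M)).card} :=
      ⟨J, hJc, (hfull J hJc).symm⟩
    refine le_antisymm (Nat.sInf_le hmem) (le_csInf ⟨_, hmem⟩ ?_)
    rintro c ⟨J', hJ', rfl⟩
    exact (hfull J' hJ').ge
end

section
/- Let t·α = s·k + r with s ≥ 1 and 0 ≤ r ≤ k−1, with α < min(k, β). If C is an (α, β, k, t)-group decodable code (a linear code of length n = tβ whose codewords consist of t buckets of β symbols, where bucket i is a codeword of a [β, α] MDS code encoding the α information symbols indexed by S_i ⊆ [k], |S_i| = α, and ⋃ S_i = [k]), then the minimum distance of C satisfies d ≤ sβ − ⌈(k−r)/C(t,s)⌉ + 1. -/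
/-- The encoding of an `(α,β,k,t)`-group decodable code: information vector
`x ∈ F^k` is mapped to `t` buckets of `β` symbols; bucket `i` is the MDS
encoding (by the `α × β` generator matrix `G i`) of the projection of `x`
onto the coordinates `S i` (listed in increasing order). -/
noncomputable def gdcEncode {k t α β : ℕ} {F : Type*} [Field F]
    (S : Fin t → Finset (Fin k)) (hScard : ∀ i, (S i).card = α)
    (G : Fin t → Matrix (Fin α) (Fin β) F) (x : Fin k → F) :
    Fin t × Fin β → F :=
  fun p => ∑ a : Fin α, G p.1 a p.2 * x ((S p.1).orderIsoOfFin (hScard p.1) a)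

lemma gdcEncode_add {k t α β : ℕ} {F : Type*} [Field F]
    (S : Fin t → Finset (Fin k)) (hScard : ∀ i, (S i).card = α)
    (G : Fin t → Matrix (Fin α) (Fin β) F) (x y : Fin k → F) :
    gdcEncode S hScard G (x + y) = gdcEncode S hScard G x + gdcEncode S hScard G y := by
  funext p
  simp [gdcEncode, mul_add, Finset.sum_add_distrib]

lemma gdcEncode_smul {k t α β : ℕ} {F : Type*} [Field F]
    (S : Fin t → Finset (Fin k)) (hScard : ∀ i, (S i).card = α)
    (G : Fin t → Matrix (Fin α) (Fin β) F) (c : F) (x : Fin k → F) :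
    gdcEncode S hScard G (c • x) = c • gdcEncode S hScard G x := by
  funext p
  simp [gdcEncode, Finset.mul_sum, mul_left_comm]

lemma gdcEncode_inj {k t α β : ℕ} {F : Type*} [Field F] (hαβ : α ≤ β)
    (S : Fin t → Finset (Fin k)) (hScard : ∀ i, (S i).card = α)
    (hcover : Finset.univ.biUnion S = Finset.univ)
    (G : Fin t → Matrix (Fin α) (Fin β) F)
    (hMDS : ∀ (i : Fin t) (J : Finset (Fin β)), J.card = α →
      ((G i).submatrix id (fun j : {x // x ∈ J} => (j : Fin β))).rank = α)
    (x : Fin k → F) (hx : gdcEncode S hScard G x = 0) : x = 0 := by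
  classical
  funext j
  have hj : j ∈ Finset.univ.biUnion S := by rw [hcover]; exact Finset.mem_univ j
  obtain ⟨i, -, hji⟩ := Finset.mem_biUnion.mp hj
  obtain ⟨J, -, hJ⟩ := Finset.exists_subset_card_eq
    (show α ≤ (Finset.univ : Finset (Fin β)).card by simpa using hαβ)
  set M : Matrix (Fin α) {x // x ∈ J} F :=
    (G i).submatrix id (fun j : {x // x ∈ J} => (j : Fin β)) with hM
  have hrank : M.rank = α := hMDS i J hJ
  have hli : LinearIndependent F (fun a => M a) := by
    rw [linearIndependent_iff_card_eq_finrank_span]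
    have h2 := M.rank_eq_finrank_span_row
    rw [hrank] at h2
    rw [Fintype.card_fin]; exact h2
  have key := Fintype.linearIndependent_iff.mp hli
    (fun a => x ((S i).orderIsoOfFin (hScard i) a))
  have hzero : ∑ a, x ((S i).orderIsoOfFin (hScard i) a) • M a = 0 := by
    funext c
    have h3 := congrFun hx (i, (c : Fin β))
    simp only [gdcEncode, Pi.zero_apply] at h3
    simp only [Finset.sum_apply, Pi.smul_apply, smul_eq_mul, Pi.zero_apply, hM,
      Matrix.submatrix_apply, id]
    simpa [mul_comm] using h3
  have h4 := key hzero (((S i).orderIsoOfFin (hScard i)).symm ⟨j, hji⟩)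
  simpa using h4

/-- Theorem 1 (upper bound): let `tα = sk + r` with `s ≥ 1`, `0 ≤ r ≤ k-1`,
and `α < min(k,β)`. If `C` is an `(α,β,k,t)`-group decodable code — its
codewords consist of `t` buckets of `β` symbols, bucket `i` being a codeword
of a `[β,α]` MDS code (every `α` columns of its generator matrix have full
rank `α`) encoding the `α` information symbols indexed by `S i ⊆ [k]` with
`|S i| = α` and `⋃ S i = [k]` — then the minimum distance of `C` satisfies
`d ≤ sβ - ⌈(k-r)/C(t,s)⌉ + 1`, i.e. there is a nonzero codeword of Hamming
weight at most that bound. -/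
theorem stmt14 {k t α β s r : ℕ} (F : Type*) [Field F] [DecidableEq F]
    (hs : 1 ≤ s) (hr : r < k) (heq : t * α = s * k + r)
    (hαk : α < k) (hαβ : α < β)
    (S : Fin t → Finset (Fin k)) (hScard : ∀ i, (S i).card = α)
    (hcover : Finset.univ.biUnion S = Finset.univ)
    (G : Fin t → Matrix (Fin α) (Fin β) F)
    (hMDS : ∀ (i : Fin t) (J : Finset (Fin β)), J.card = α →
      ((G i).submatrix id (fun j : {x // x ∈ J} => (j : Fin β))).rank = α) :
    ∃ x : Fin k → F,
      gdcEncode S hScard G x ≠ 0 ∧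
      (Finset.univ.filter (fun p : Fin t × Fin β =>
          gdcEncode S hScard G x p ≠ 0)).card ≤
        s * β - (k - r) ⌈/⌉ Nat.choose t s + 1 := by
  classical
  -- basic arithmetic facts
  have hk : 0 < k := lt_of_le_of_lt (Nat.zero_le r) hr
  have hsk : 0 < s * k := Nat.mul_pos hs hk
  have hα1 : 1 ≤ α := by
    rcases Nat.eq_zero_or_pos α with h | h
    · subst h; simp at heq; omega
    · exact h
  have ht : 0 < t := by
    rcases Nat.eq_zero_or_pos t with h | h
    · subst h; simp at heq; omega
    · exact h
  have hst : s < t := by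
    have h1 : t * (α + 1) ≤ t * k := Nat.mul_le_mul_left t (by omega)
    have h1' : t * (α + 1) = t * α + t := by ring
    have h2 : s * k < t * k := by omega
    exact lt_of_mul_lt_mul_right h2 (Nat.zero_le k)
  set Tset : Fin k → Finset (Fin t) := fun j => Finset.univ.filter (fun i => j ∈ S i) with hTset
  have hm1 : ∀ j : Fin k, 1 ≤ (Tset j).card := by
    intro j
    have hj : j ∈ Finset.univ.biUnion S := by rw [hcover]; exact Finset.mem_univ j
    obtain ⟨i, -, hji⟩ := Finset.mem_biUnion.mp hj
    exact Finset.card_pos.mpr ⟨i, Finset.mem_filter.mpr ⟨Finset.mem_univ i, hji⟩⟩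
  have hsum : ∑ j : Fin k, (Tset j).card = s * k + r := by
    rw [← heq]
    calc ∑ j : Fin k, (Tset j).card
        = ∑ j : Fin k, ∑ i : Fin t, if j ∈ S i then 1 else 0 := by
          simp only [hTset, Finset.card_filter]
      _ = ∑ i : Fin t, ∑ j : Fin k, if j ∈ S i then 1 else 0 := Finset.sum_comm
      _ = ∑ i : Fin t, (S i).card := by
          refine Finset.sum_congr rfl fun i _ => ?_
          rw [← Finset.card_filter]
          congr 1
          exact Finset.filter_univ_mem (S i)
      _ = t * α := by simp [hScard, Finset.sum_const, Finset.card_univ, mul_comm]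
  -- pigeonhole: find a good s-subset T₀
  set P := Finset.powersetCard s (Finset.univ : Finset (Fin t)) with hP
  set f : Finset (Fin t) → ℕ :=
    fun T => (Finset.univ.filter (fun j : Fin k => Tset j ⊆ T)).card with hf
  have hinner : ∀ j : Fin k,
      s + 1 ≤ (P.filter (fun T => Tset j ⊆ T)).card + (Tset j).card := by
    intro j
    by_cases hm : (Tset j).card ≤ s
    · have hcard : (Finset.powersetCard (s - (Tset j).card) (Finset.univ \ Tset j)).card
          = Nat.choose (t - (Tset j).card) (s - (Tset j).card) := by
        rw [Finset.card_powersetCard, Finset.card_sdiff_of_subset (Finset.subset_univ _),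
          Finset.card_univ, Fintype.card_fin]
      have hle : (Finset.powersetCard (s - (Tset j).card) (Finset.univ \ Tset j)).card
          ≤ (P.filter (fun T => Tset j ⊆ T)).card := by
        apply Finset.card_le_card_of_injOn (fun T' => Tset j ∪ T')
        · intro T' hT'
          rw [Finset.mem_coe, Finset.mem_powersetCard] at hT'
          have hdisj : Disjoint (Tset j) T' := by
            refine Finset.disjoint_left.mpr fun a ha ha' => ?_
            exact (Finset.mem_sdiff.mp (hT'.1 ha')).2 ha
          rw [Finset.mem_coe, Finset.mem_filter, hP, Finset.mem_powersetCard]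
          refine ⟨⟨Finset.subset_univ _, ?_⟩, Finset.subset_union_left⟩
          rw [Finset.card_union_of_disjoint hdisj, hT'.2]
          omega
        · intro T1 h1 T2 h2 h12
          simp only [Finset.mem_coe, Finset.mem_powersetCard] at h1 h2
          have d1 : Disjoint (Tset j) T1 := Finset.disjoint_left.mpr
            (fun a ha ha' => (Finset.mem_sdiff.mp (h1.1 ha')).2 ha)
          have d2 : Disjoint (Tset j) T2 := Finset.disjoint_left.mpr
            (fun a ha ha' => (Finset.mem_sdiff.mp (h2.1 ha')).2 ha)
          rw [← Finset.union_sdiff_cancel_left d1, ← Finset.union_sdiff_cancel_left d2]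
          simp only at h12
          rw [h12]
      have hchoose : s - (Tset j).card + 1
          ≤ Nat.choose (t - (Tset j).card) (s - (Tset j).card) := by
        calc s - (Tset j).card + 1
            = Nat.choose (s - (Tset j).card + 1) (s - (Tset j).card) := by
              rw [Nat.choose_succ_self_right]
          _ ≤ Nat.choose (t - (Tset j).card) (s - (Tset j).card) :=
              Nat.choose_le_choose _ (by omega)
      omega
    · omega
  have hdc : ∑ T ∈ P, f T = ∑ j : Fin k, (P.filter (fun T => Tset j ⊆ T)).card := by
    simp only [hf, Finset.card_filter]
    rw [Finset.sum_comm]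
  have hsum2 : k - r ≤ ∑ T ∈ P, f T := by
    have h1 : k * (s + 1)
        ≤ (∑ j : Fin k, (P.filter (fun T => Tset j ⊆ T)).card) + (s * k + r) := by
      calc k * (s + 1) = ∑ _j : Fin k, (s + 1) := by
            rw [Finset.sum_const, Finset.card_univ, Fintype.card_fin, smul_eq_mul]
        _ ≤ ∑ j : Fin k, ((P.filter (fun T => Tset j ⊆ T)).card + (Tset j).card) :=
            Finset.sum_le_sum (fun j _ => hinner j)
        _ = (∑ j : Fin k, (P.filter (fun T => Tset j ⊆ T)).card)
              + ∑ j : Fin k, (Tset j).card := Finset.sum_add_distrib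
        _ = (∑ j : Fin k, (P.filter (fun T => Tset j ⊆ T)).card) + (s * k + r) := by
            rw [hsum]
    have h3 : k * (s + 1) = s * k + k := by ring
    rw [hdc]
    omega
  have hPne : P.Nonempty := Finset.powersetCard_nonempty.mpr (by simp; omega)
  obtain ⟨T₀, hT₀, hmax⟩ := Finset.exists_max_image P f hPne
  have hPcard : P.card = Nat.choose t s := by
    rw [hP, Finset.card_powersetCard, Finset.card_univ, Fintype.card_fin]
  have hpos : 0 < Nat.choose t s := Nat.choose_pos (le_of_lt hst)
  have hub : ∑ T ∈ P, f T ≤ Nat.choose t s * f T₀ := by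
    calc ∑ T ∈ P, f T ≤ P.card • f T₀ := Finset.sum_le_card_nsmul P f _ hmax
      _ = Nat.choose t s * f T₀ := by rw [hPcard, smul_eq_mul]
  set c := (k - r) ⌈/⌉ Nat.choose t s with hc
  have hcb : c ≤ f T₀ := (ceilDiv_le_iff_le_mul hpos).mpr (le_trans hsum2 hub)
  have hc1 : 1 ≤ c := by
    by_contra h
    have h0 : c ≤ 0 := by omega
    have := (ceilDiv_le_iff_le_mul hpos).mp h0
    omega
  -- the good sets
  set B : Finset (Fin k) := Finset.univ.filter (fun j : Fin k => Tset j ⊆ T₀) with hB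
  have hBcard : B.card = f T₀ := rfl
  have hT₀card : T₀.card = s := (Finset.mem_powersetCard.mp hT₀).2
  set R : Finset (Fin t × Fin β) := T₀ ×ˢ (Finset.univ : Finset (Fin β)) with hR
  have hRcard : R.card = s * β := by
    rw [hR, Finset.card_product, hT₀card, Finset.card_univ, Fintype.card_fin]
  obtain ⟨D, hDR, hDcard⟩ := Finset.exists_subset_card_eq
    (show min (B.card - 1) (s * β) ≤ R.card by rw [hRcard]; omega)
  -- extension by zero
  set extB : ({j // j ∈ B} → F) → (Fin k → F) :=
    fun y j => if h : j ∈ B then y ⟨j, h⟩ else 0 with hextB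
  have hext_add : ∀ y z, extB (y + z) = extB y + extB z := by
    intro y z; funext j; simp only [hextB, Pi.add_apply]; split <;> simp
  have hext_smul : ∀ (a : F) y, extB (a • y) = a • extB y := by
    intro a y; funext j; simp only [hextB, Pi.smul_apply, smul_eq_mul]; split <;> simp
  -- the restricted linear map
  set Φ : ({j // j ∈ B} → F) →ₗ[F] ({p // p ∈ D} → F) :=
    { toFun := fun y p => gdcEncode S hScard G (extB y) p.1
      map_add' := by
        intro y z; funext p
        simp only [hext_add, gdcEncode_add, Pi.add_apply]
      map_smul' := by
        intro a y; funext p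
        simp only [hext_smul, gdcEncode_smul, Pi.smul_apply, RingHom.id_apply,
          smul_eq_mul] } with hΦ
  -- Φ has nontrivial kernel
  have hker : ∃ y : {j // j ∈ B} → F, y ≠ 0 ∧ Φ y = 0 := by
    by_contra h
    push_neg at h
    have hinj : Function.Injective Φ := by
      intro a b hab
      have h0 : Φ (a - b) = 0 := by rw [map_sub, hab, sub_self]
      have h1 : a - b = 0 := by
        by_contra hne
        exact h (a - b) hne h0
      exact sub_eq_zero.mp h1
    have hle := LinearMap.finrank_le_finrank_of_injective hinj
    rw [Module.finrank_pi, Module.finrank_pi, Fintype.card_coe, Fintype.card_coe] at hle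
    rw [hDcard] at hle
    omega
  obtain ⟨y, hy0, hyker⟩ := hker
  refine ⟨extB y, ?_, ?_⟩
  · -- nonzero codeword
    intro h0
    have := gdcEncode_inj (le_of_lt hαβ) S hScard hcover G hMDS (extB y) h0
    apply hy0
    funext j
    have := congrFun this (j : Fin k)
    simp only [hextB, Pi.zero_apply] at this ⊢
    rw [dif_pos j.2] at this
    exact this
  · -- weight bound
    have hsupp : (Finset.univ.filter (fun p : Fin t × Fin β =>
        gdcEncode S hScard G (extB y) p ≠ 0)) ⊆ R \ D := by
      intro p hp
      rw [Finset.mem_filter] at hp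
      have hpne := hp.2
      rw [Finset.mem_sdiff]
      constructor
      · -- p ∈ R, i.e. p.1 ∈ T₀
        rw [hR, Finset.mem_product]
        refine ⟨?_, Finset.mem_univ _⟩
        by_contra hpT
        apply hpne
        show (∑ a : Fin α, G p.1 a p.2 * extB y ((S p.1).orderIsoOfFin (hScard p.1) a)) = 0
        refine Finset.sum_eq_zero fun a _ => ?_
        have hmem : ((S p.1).orderIsoOfFin (hScard p.1) a : Fin k) ∈ S p.1 :=
          ((S p.1).orderIsoOfFin (hScard p.1) a).2
        have hzero : extB y ((S p.1).orderIsoOfFin (hScard p.1) a : Fin k) = 0 := by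
          simp only [hextB]
          split
          · next hmem' =>
            exfalso
            rw [hB, Finset.mem_filter] at hmem'
            exact hpT (hmem'.2 (by simp [hTset, hmem]))
          · rfl
        rw [hzero, mul_zero]
      · -- p ∉ D
        intro hpD
        exact hpne (congrFun hyker ⟨p, hpD⟩)
    calc (Finset.univ.filter (fun p : Fin t × Fin β =>
          gdcEncode S hScard G (extB y) p ≠ 0)).card
        ≤ (R \ D).card := Finset.card_le_card hsupp
      _ = R.card - D.card := Finset.card_sdiff_of_subset hDR
      _ ≤ s * β - c + 1 := by rw [hRcard, hDcard]; omega
end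

section
/- Let t·α = s·k + r with s ≥ 1 and 0 ≤ r ≤ k−1. Then there exists a k×t binary matrix M0 such that each column has exactly α ones, the minimum row weight equals s, and Γ(M0) = ⌈(k−r)/C(t,s)⌉, where Γ(M0) is the maximum number of rows sharing a common support among rows of minimum weight. -/
open Finset

lemma card_filter_fin_s17 (n : ℕ) (P : ℕ → Prop) [DecidablePred P] :
    ((Finset.univ : Finset (Fin n)).filter (fun x => P x.val)).card
      = ((Finset.range n).filter P).card := by
  apply Finset.card_nbij (i := fun x => x.val)
  · intro x hx; simp at hx ⊢; exact hx
  · intro x _ y _ h; exact Fin.ext h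
  · intro y hy; simp at hy ⊢; exact ⟨⟨y, hy.1⟩, hy.2, rfl⟩

lemma card_split (k r : ℕ) (hr : r ≤ k) (P : ℕ → Prop) [DecidablePred P] :
    ((Finset.univ : Finset (Fin k)).filter (fun i => P i.val)).card
      = ((Finset.univ : Finset (Fin r)).filter (fun p => P p.val)).card
        + ((Finset.univ : Finset (Fin (k - r))).filter (fun x => P (r + x.val))).card := by
  rw [card_filter_fin_s17 k P, card_filter_fin_s17 r P, card_filter_fin_s17 (k-r) (fun y => P (r+y))]
  have h1 : Finset.range k = Finset.range r ∪ Finset.Ico r k := by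
    ext x; simp; omega
  rw [h1, Finset.filter_union, Finset.card_union_of_disjoint]
  · congr 1
    apply Finset.card_nbij' (i := fun x => x - r) (j := fun x => r + x)
    · intro x hx; simp at hx ⊢
      refine ⟨by omega, ?_⟩
      have : r + (x - r) = x := by omega
      rw [this]; exact hx.2
    · intro x hx; simp at hx ⊢; exact ⟨by omega, hx.2⟩
    · intro x hx; simp at hx; beta_reduce; omega
    · intro x hx; simp at hx; beta_reduce; omega
  · apply Finset.disjoint_filter_filter
    rw [Finset.range_eq_Ico]
    exact Finset.Ico_disjoint_Ico_consecutive 0 r k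

def Sall (t s : ℕ) : Finset (Finset (Fin t)) := Finset.univ.powersetCard s

def cov {t : ℕ} (F : Finset (Finset (Fin t))) (j : Fin t) : ℕ :=
  (F.filter (fun S => j ∈ S)).card

lemma mem_Sall {t s : ℕ} {S : Finset (Fin t)} : S ∈ Sall t s ↔ S.card = s := by
  simp [Sall, Finset.mem_powersetCard_univ]

lemma card_Sall (t s : ℕ) : (Sall t s).card = Nat.choose t s := by
  simp [Sall, Finset.card_powersetCard]

lemma sum_cov {t s : ℕ} (F : Finset (Finset (Fin t))) (hF : ∀ S ∈ F, S.card = s) :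
    ∑ j : Fin t, cov F j = F.card * s := by
  unfold cov
  simp only [Finset.card_filter]
  rw [Finset.sum_comm]
  have h : ∀ S ∈ F, (∑ j : Fin t, if j ∈ S then 1 else 0) = s := by
    intro S hS
    rw [← hF S hS, Finset.card_eq_sum_ones]
    rw [Finset.sum_ite_mem, Finset.univ_inter]
  rw [Finset.sum_congr rfl h, Finset.sum_const, smul_eq_mul]

lemma cov_Sall_const {t s : ℕ} (j j' : Fin t) : cov (Sall t s) j = cov (Sall t s) j' := by
  unfold cov
  apply Finset.card_nbij' (i := fun S => S.image (Equiv.swap j j'))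
    (j := fun S => S.image (Equiv.swap j j'))
  · intro S hS
    simp only [Finset.mem_coe, Finset.mem_filter, mem_Sall] at hS ⊢
    constructor
    · rw [Finset.card_image_of_injective _ (Equiv.injective _)]; exact hS.1
    · refine Finset.mem_image.2 ⟨j, hS.2, Equiv.swap_apply_left j j'⟩
  · intro S hS
    simp only [Finset.mem_coe, Finset.mem_filter, mem_Sall] at hS ⊢
    constructor
    · rw [Finset.card_image_of_injective _ (Equiv.injective _)]; exact hS.1
    · refine Finset.mem_image.2 ⟨j', hS.2, Equiv.swap_apply_right j j'⟩
  · intro S _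
    beta_reduce; rw [Finset.image_image]
    have : (Equiv.swap j j') ∘ (Equiv.swap j j') = id := by
      funext x; simp
    rw [this, Finset.image_id]
  · intro S _
    beta_reduce; rw [Finset.image_image]
    have : (Equiv.swap j j') ∘ (Equiv.swap j j') = id := by
      funext x; simp
    rw [this, Finset.image_id]

lemma t_mul_cov_Sall {t s : ℕ} (j : Fin t) :
    t * cov (Sall t s) j = s * Nat.choose t s := by
  have h1 : ∑ j' : Fin t, cov (Sall t s) j' = (Nat.choose t s) * s := by
    rw [sum_cov (Sall t s) (fun S hS => mem_Sall.1 hS), card_Sall]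
  have h2 : ∑ j' : Fin t, cov (Sall t s) j' = t * cov (Sall t s) j := by
    rw [Finset.sum_congr rfl (fun j' _ => cov_Sall_const j' j)]
    simp [Finset.sum_const, Finset.card_univ, mul_comm]
  rw [← h2, h1, mul_comm]

lemma balanced_exists {t : ℕ} (s e : ℕ) (he : e ≤ (Sall t s).card) :
    ∃ E, E ⊆ Sall t s ∧ E.card = e ∧ ∀ j₁ j₂ : Fin t, cov E j₁ ≤ cov E j₂ + 1 := by
  classical
  set cand := (Sall t s).powersetCard e with hcand
  have hne : cand.Nonempty := by
    obtain ⟨E, hE1, hE2⟩ := Finset.exists_subset_card_eq he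
    exact ⟨E, Finset.mem_powersetCard.2 ⟨hE1, hE2⟩⟩
  obtain ⟨F, hF, hmin⟩ := Finset.exists_min_image cand (fun F => ∑ j : Fin t, (cov F j)^2) hne
  obtain ⟨hFsub, hFcard⟩ := Finset.mem_powersetCard.1 hF
  refine ⟨F, hFsub, hFcard, ?_⟩
  by_contra hbad
  push_neg at hbad
  obtain ⟨j1, j2, hgt⟩ := hbad
  have hne12 : j1 ≠ j2 := by rintro rfl; omega
  set ψ : Finset (Fin t) → Finset (Fin t) := fun T => insert j2 (T.erase j1) with hψ
  have hj1ψ : ∀ T'' : Finset (Fin t), j1 ∉ ψ T'' := by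
    intro T'' h
    rcases Finset.mem_insert.1 h with h | h
    · exact hne12 h
    · exact Finset.notMem_erase _ _ h
  have hj2ψ : ∀ T'' : Finset (Fin t), j2 ∈ ψ T'' := fun _ => Finset.mem_insert_self _ _
  set A := F.filter (fun T => j1 ∈ T ∧ j2 ∉ T) with hA
  set B := F.filter (fun T => j2 ∈ T ∧ j1 ∉ T) with hB
  set Both := F.filter (fun T => j1 ∈ T ∧ j2 ∈ T) with hBoth
  have hcov1 : Both.card + A.card = cov F j1 := by
    unfold cov
    rw [← Finset.card_filter_add_card_filter_not (p := fun T => j2 ∈ T)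
      (s := F.filter (fun T => j1 ∈ T))]
    rw [Finset.filter_filter, Finset.filter_filter]
  have hcov2 : (F.filter (fun T => j2 ∈ T ∧ j1 ∈ T)).card + B.card = cov F j2 := by
    unfold cov
    rw [← Finset.card_filter_add_card_filter_not (p := fun T => j1 ∈ T)
      (s := F.filter (fun T => j2 ∈ T))]
    rw [Finset.filter_filter, Finset.filter_filter]
  have hBothcomm : (F.filter (fun T => j2 ∈ T ∧ j1 ∈ T)) = Both := by
    apply Finset.filter_congr; intro T _; exact and_comm
  rw [hBothcomm] at hcov2
  have exT : ∃ T ∈ A, ψ T ∉ F := by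
    by_contra hall
    push_neg at hall
    have hmaps : ∀ T ∈ A, ψ T ∈ B := by
      intro T hT
      exact Finset.mem_filter.2 ⟨hall T hT, hj2ψ T, hj1ψ T⟩
    have hinj : Set.InjOn ψ A := by
      intro T hT T' hT' heq
      have h1 := Finset.mem_filter.1 hT
      have h2 := Finset.mem_filter.1 hT'
      have recover : ∀ T'' : Finset (Fin t), j1 ∈ T'' → j2 ∉ T'' →
          insert j1 ((ψ T'').erase j2) = T'' := by
        intro T'' hj1 hj2
        have : (ψ T'').erase j2 = T''.erase j1 := by
          rw [hψ]
          apply Finset.erase_insert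
          simp only [Finset.mem_erase]
          exact fun h => hj2 h.2
        rw [this, Finset.insert_erase hj1]
      calc T = insert j1 ((ψ T).erase j2) := (recover T h1.2.1 h1.2.2).symm
        _ = insert j1 ((ψ T').erase j2) := by rw [heq]
        _ = T' := recover T' h2.2.1 h2.2.2
    have hcard := Finset.card_le_card_of_injOn ψ hmaps hinj
    omega
  obtain ⟨T, hTA, hψTnF⟩ := exT
  have hTmem := Finset.mem_filter.1 hTA
  have hTF : T ∈ F := hTmem.1
  have hj1T : j1 ∈ T := hTmem.2.1
  have hj2T : j2 ∉ T := hTmem.2.2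
  have hTcard : T.card = s := mem_Sall.1 (hFsub hTF)
  have hψTcard : (ψ T).card = s := by
    rw [hψ]
    rw [Finset.card_insert_of_notMem (fun h => hj2T (Finset.mem_of_mem_erase h))]
    rw [Finset.card_erase_of_mem hj1T, hTcard]
    have : 1 ≤ s := by
      rw [← hTcard]; exact Finset.card_pos.2 ⟨j1, hj1T⟩
    omega
  set F' := insert (ψ T) (F.erase T) with hF'
  have hψTnE : ψ T ∉ F.erase T := fun h => hψTnF (Finset.mem_of_mem_erase h)
  have hF'card : F'.card = e := by
    rw [hF', Finset.card_insert_of_notMem hψTnE, Finset.card_erase_of_mem hTF, hFcard]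
    have : 1 ≤ e := by rw [← hFcard]; exact Finset.card_pos.2 ⟨T, hTF⟩
    omega
  have hF'sub : F' ⊆ Sall t s := by
    intro S hS
    rcases Finset.mem_insert.1 hS with h | h
    · rw [h]; exact mem_Sall.2 hψTcard
    · exact hFsub (Finset.mem_of_mem_erase h)
  have hF'cand : F' ∈ cand := Finset.mem_powersetCard.2 ⟨hF'sub, hF'card⟩
  have key : ∀ j : Fin t, cov F' j + (if j ∈ T then 1 else 0)
      = cov F j + (if j ∈ ψ T then 1 else 0) := by
    intro j
    unfold cov
    have herase : (F.erase T).filter (fun S => j ∈ S) = (F.filter (fun S => j ∈ S)).erase T := by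
      ext S; simp only [Finset.mem_erase, Finset.mem_filter]; tauto
    have hTfil : T ∈ F.filter (fun S => j ∈ S) ↔ j ∈ T := by
      simp [Finset.mem_filter, hTF]
    rw [hF', Finset.filter_insert]
    by_cases hjψ : j ∈ ψ T
    · rw [if_pos hjψ, if_pos hjψ]
      have hnotmem : ψ T ∉ (F.erase T).filter (fun S => j ∈ S) := by
        rw [herase]
        exact fun h => hψTnF (Finset.mem_of_mem_filter _ (Finset.mem_of_mem_erase h))
      rw [Finset.card_insert_of_notMem hnotmem, herase]
      by_cases hjT : j ∈ T
      · rw [if_pos hjT, Finset.card_erase_of_mem (hTfil.2 hjT)]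
        have h1 : 1 ≤ (F.filter (fun S => j ∈ S)).card := Finset.card_pos.2 ⟨T, hTfil.2 hjT⟩
        omega
      · rw [if_neg hjT, Finset.erase_eq_of_notMem (fun h => hjT (hTfil.1 h))]
    · rw [if_neg hjψ, if_neg hjψ, herase]
      by_cases hjT : j ∈ T
      · rw [if_pos hjT, Finset.card_erase_of_mem (hTfil.2 hjT)]
        have h1 : 1 ≤ (F.filter (fun S => j ∈ S)).card := Finset.card_pos.2 ⟨T, hTfil.2 hjT⟩
        omega
      · rw [if_neg hjT, Finset.erase_eq_of_notMem (fun h => hjT (hTfil.1 h))]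
  have hcovj1 : cov F' j1 + 1 = cov F j1 := by
    have := key j1
    rw [if_pos hj1T, if_neg (hj1ψ T)] at this
    omega
  have hcovj2 : cov F' j2 = cov F j2 + 1 := by
    have := key j2
    rw [if_neg hj2T, if_pos (hj2ψ T)] at this
    omega
  have hcovo : ∀ j : Fin t, j ≠ j1 → j ≠ j2 → cov F' j = cov F j := by
    intro j h1 h2
    have hiff : (j ∈ ψ T) ↔ (j ∈ T) := by
      rw [hψ]
      simp only [Finset.mem_insert, Finset.mem_erase]
      constructor
      · rintro (h | h)
        · exact absurd h h2
        · exact h.2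
      · intro h; exact Or.inr ⟨h1, h⟩
    have := key j
    by_cases hj : j ∈ T
    · rw [if_pos hj, if_pos (hiff.2 hj)] at this; omega
    · rw [if_neg hj, if_neg (fun h => hj (hiff.1 h))] at this; omega
  have hsplit : ∀ (f : Fin t → ℕ),
      ∑ j, f j = ∑ j ∈ (Finset.univ \ {j1, j2}), f j + (f j1 + f j2) := by
    intro f
    rw [← Finset.sum_sdiff (Finset.subset_univ {j1, j2})]
    congr 1
    rw [Finset.sum_pair hne12]
  have hlt : ∑ j : Fin t, (cov F' j)^2 < ∑ j : Fin t, (cov F j)^2 := by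
    rw [hsplit (fun j => (cov F' j)^2), hsplit (fun j => (cov F j)^2)]
    have hrest : ∑ j ∈ (Finset.univ \ {j1, j2}), (cov F' j)^2
        = ∑ j ∈ (Finset.univ \ {j1, j2}), (cov F j)^2 := by
      apply Finset.sum_congr rfl
      intro j hj
      simp only [Finset.mem_sdiff, Finset.mem_insert, Finset.mem_singleton] at hj
      rw [hcovo j (fun h => hj.2 (Or.inl h)) (fun h => hj.2 (Or.inr h))]
    rw [hrest]
    apply Nat.add_lt_add_left
    have h1 : cov F j1 = cov F' j1 + 1 := hcovj1.symm
    rw [h1, hcovj2]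
    have hb : cov F j2 < cov F' j1 := by omega
    nlinarith [hb]
  exact absurd (hmin F' hF'cand) (by omega)

lemma div_eq_iff' (x q b : ℕ) (hq : 0 < q) : x / q = b ↔ q * b ≤ x ∧ x < q * b + q := by
  constructor
  · intro h
    have h1 := Nat.div_add_mod x q
    have h2 : x % q < q := Nat.mod_lt _ hq
    rw [h] at h1
    omega
  · intro ⟨h1, h2⟩
    apply Nat.div_eq_of_lt_le
    · rw [mul_comm]; omega
    · have : (b + 1) * q = q * b + q := by ring
      omega

lemma count_mod_lt (r a d : ℕ) (hr : 0 < r) (hd : d ≤ r) :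
    ((Finset.range r).filter (fun p => (p + a) % r < d)).card = d := by
  have hinv : ∀ p : ℕ, p < r → ((p + a) % r + (r - a % r)) % r = p ∧
      ((p + (r - a % r)) % r + a) % r = p := by
    intro p hp
    have hma := Nat.mod_add_div a r
    have hmr : a % r < r := Nat.mod_lt _ hr
    constructor
    · rw [Nat.mod_add_mod]
      have he : p + a + (r - a % r) = p + r * (a / r + 1) := by
        have : r * (a / r + 1) = r * (a / r) + r := by ring
        omega
      rw [he, Nat.add_mul_mod_self_left p r (a / r + 1), Nat.mod_eq_of_lt hp]
    · rw [Nat.mod_add_mod]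
      have he : p + (r - a % r) + a = p + r * (a / r + 1) := by
        have : r * (a / r + 1) = r * (a / r) + r := by ring
        omega
      rw [he, Nat.add_mul_mod_self_left p r (a / r + 1), Nat.mod_eq_of_lt hp]
  have hbij : ((Finset.range r).filter (fun p => (p + a) % r < d)).card
      = ((Finset.range r).filter (fun y => y < d)).card := by
    apply Finset.card_nbij' (i := fun p => (p + a) % r) (j := fun y => (y + (r - a % r)) % r)
    · intro p hp
      simp only [Finset.mem_coe, Finset.mem_filter, Finset.mem_range] at hp ⊢
      exact ⟨Nat.mod_lt _ hr, hp.2⟩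
    · intro y hy
      simp only [Finset.mem_coe, Finset.mem_filter, Finset.mem_range] at hy ⊢
      refine ⟨Nat.mod_lt _ hr, ?_⟩
      rw [(hinv y hy.1).2]
      exact hy.2
    · intro p hp
      simp only [Finset.mem_coe, Finset.mem_filter, Finset.mem_range] at hp
      exact (hinv p hp.1).1
    · intro y hy
      simp only [Finset.mem_coe, Finset.mem_filter, Finset.mem_range] at hy
      exact (hinv y hy.1).2
  rw [hbij]
  have : (Finset.range r).filter (fun y => y < d) = Finset.range d := by
    ext x; simp only [Finset.mem_range, Finset.mem_filter]; omega
  rw [this, Finset.card_range]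

lemma count_mod_eq (c r p : ℕ) (hp : p < r) :
    ((Finset.range (c * r)).filter (fun x => x % r = p)).card = c := by
  have hr : 0 < r := by omega
  have hbij : ((Finset.range (c * r)).filter (fun x => x % r = p)).card
      = (Finset.range c).card := by
    apply Finset.card_nbij' (i := fun x => x / r) (j := fun y => r * y + p)
    · intro x hx
      simp only [Finset.mem_coe, Finset.mem_filter, Finset.mem_range] at hx ⊢
      exact (Nat.div_lt_iff_lt_mul hr).2 hx.1
    · intro y hy
      simp only [Finset.mem_coe, Finset.mem_filter, Finset.mem_range] at hy ⊢
      constructor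
      · calc r * y + p < r * y + r := by omega
          _ = (y + 1) * r := by ring
          _ ≤ c * r := Nat.mul_le_mul_right r (by omega)
      · rw [Nat.mul_add_mod r y p, Nat.mod_eq_of_lt hp]
    · intro x hx
      simp only [Finset.mem_coe, Finset.mem_filter, Finset.mem_range] at hx
      rw [← hx.2]
      exact Nat.div_add_mod x r
    · intro y hy
      simp only [Finset.mem_coe, Finset.mem_range] at hy
      beta_reduce; rw [Nat.mul_add_div hr y p, Nat.div_eq_of_lt hp]
      omega
  rw [hbij, Finset.card_range]

lemma count_div (M q b : ℕ) (hq : 0 < q) (hM : q * (b + 1) ≤ M) :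
    ((Finset.range M).filter (fun x => x / q = b)).card = q := by
  have : (Finset.range M).filter (fun x => x / q = b) = Finset.Ico (q * b) (q * b + q) := by
    ext x
    simp only [Finset.mem_filter, Finset.mem_range, Finset.mem_Ico, div_eq_iff' x q b hq]
    have : q * (b+1) = q * b + q := by ring
    omega
  rw [this, Nat.card_Ico]
  omega

noncomputable def pick {t : ℕ} (F : Finset (Finset (Fin t))) (a : ℕ) : Finset (Fin t) :=
  if h : a < F.card then (F.equivFin.symm ⟨a, h⟩ : {x // x ∈ F}).val else ∅

lemma pick_mem {t : ℕ} (F : Finset (Finset (Fin t))) {a : ℕ} (h : a < F.card) :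
    pick F a ∈ F := by
  rw [pick, dif_pos h]
  exact (F.equivFin.symm ⟨a, h⟩).2

lemma pick_inj {t : ℕ} (F : Finset (Finset (Fin t))) {a b : ℕ}
    (ha : a < F.card) (hb : b < F.card) (h : pick F a = pick F b) : a = b := by
  unfold pick at h
  rw [dif_pos ha, dif_pos hb] at h
  have := F.equivFin.symm.injective (Subtype.ext h)
  have h2 := congrArg Fin.val this
  simpa using h2

lemma pick_surj {t : ℕ} (F : Finset (Finset (Fin t))) {S : Finset (Fin t)} (hS : S ∈ F) :
    ∃ a, a < F.card ∧ pick F a = S := by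
  refine ⟨(F.equivFin ⟨S, hS⟩ : Fin F.card).val, (F.equivFin ⟨S, hS⟩).isLt, ?_⟩
  rw [pick, dif_pos (F.equivFin ⟨S, hS⟩).isLt]
  have : (⟨(F.equivFin ⟨S, hS⟩ : Fin F.card).val, (F.equivFin ⟨S, hS⟩).isLt⟩ : Fin F.card)
      = F.equivFin ⟨S, hS⟩ := by
    apply Fin.ext; rfl
  rw [this, Equiv.symm_apply_apply]

noncomputable def gfun {t : ℕ} (s q : ℕ) (E : Finset (Finset (Fin t))) (x : ℕ) :
    Finset (Fin t) :=
  if x < q * (Sall t s \ E).card then pick (Sall t s \ E) (x / q)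
  else pick E ((x - q * (Sall t s \ E).card) / (q - 1))

section gfunLemmas

variable {t : ℕ} {s q : ℕ} {E : Finset (Finset (Fin t))}

lemma gfun_mem (hq : 0 < q) (hE : E ⊆ Sall t s)
    {x : ℕ} (hx : x < q * (Sall t s \ E).card + (q - 1) * E.card) :
    gfun s q E x ∈ Sall t s := by
  unfold gfun
  by_cases h : x < q * (Sall t s \ E).card
  · rw [if_pos h]
    have hlt : x / q < (Sall t s \ E).card := (Nat.div_lt_iff_lt_mul hq).2 (by rw [Nat.mul_comm]; omega)
    exact (Finset.mem_sdiff.1 (pick_mem _ hlt)).1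
  · rw [if_neg h]
    have hq2 : 1 < q := by
      rcases Nat.lt_or_ge 1 q with h' | h'
      · exact h'
      · exfalso
        have : q = 1 := by omega
        rw [this] at hx h
        simp at hx h
        omega
    have hlt : (x - q * (Sall t s \ E).card) / (q - 1) < E.card := by
      apply (Nat.div_lt_iff_lt_mul (by omega)).2
      have : E.card * (q - 1) = (q - 1) * E.card := by ring
      omega
    exact hE (pick_mem _ hlt)

lemma gfun_count_notin (hq : 0 < q) (hs : 0 < s)
    {S : Finset (Fin t)} (hS : S ∈ Sall t s \ E) :
    ((Finset.range (q * (Sall t s \ E).card + (q - 1) * E.card)).filter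
      (fun x => gfun s q E x = S)).card = q := by
  set n1 := (Sall t s \ E).card with hn1
  set m := q * n1 + (q - 1) * E.card with hm
  obtain ⟨a, ha, hpick⟩ := pick_surj _ hS
  have hSne : S ≠ ∅ := by
    intro h
    have := mem_Sall.1 (Finset.mem_sdiff.1 hS).1
    rw [h] at this
    simp at this
    omega
  have hset : (Finset.range m).filter (fun x => gfun s q E x = S)
      = (Finset.range (q * n1)).filter (fun x => x / q = a) := by
    ext x
    simp only [Finset.mem_filter, Finset.mem_range]
    constructor
    · rintro ⟨hxm, hgx⟩
      unfold gfun at hgx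
      rw [← hn1] at hgx
      by_cases h : x < q * n1
      · rw [if_pos h] at hgx
        have hlt : x / q < n1 := (Nat.div_lt_iff_lt_mul hq).2 (by rw [Nat.mul_comm]; omega)
        exact ⟨h, pick_inj _ hlt ha (hgx.trans hpick.symm)⟩
      · rw [if_neg h] at hgx
        exfalso
        by_cases h2 : (x - q * n1) / (q - 1) < E.card
        · have := pick_mem E h2
          rw [hgx] at this
          exact (Finset.mem_sdiff.1 hS).2 this
        · rw [pick, dif_neg h2] at hgx
          exact hSne hgx.symm
    · rintro ⟨hx, hdiv⟩
      refine ⟨by omega, ?_⟩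
      unfold gfun
      rw [← hn1, if_pos hx, hdiv]
      exact hpick
  rw [hset]
  exact count_div (q * n1) q a hq (Nat.mul_le_mul_left q ha)

lemma gfun_count_in (hq : 0 < q) (hE : E ⊆ Sall t s)
    {S : Finset (Fin t)} (hS : S ∈ E) :
    ((Finset.range (q * (Sall t s \ E).card + (q - 1) * E.card)).filter
      (fun x => gfun s q E x = S)).card = q - 1 := by
  set n1 := (Sall t s \ E).card with hn1
  set m := q * n1 + (q - 1) * E.card with hm
  obtain ⟨b, hb, hpick⟩ := pick_surj _ hS
  have hfirst : ∀ x, x < q * n1 → gfun s q E x ≠ S := by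
    intro x hx hgx
    unfold gfun at hgx
    rw [← hn1] at hgx
    rw [if_pos hx] at hgx
    have hlt : x / q < n1 := (Nat.div_lt_iff_lt_mul hq).2 (by rw [Nat.mul_comm]; omega)
    have := pick_mem (Sall t s \ E) hlt
    rw [hgx] at this
    exact (Finset.mem_sdiff.1 this).2 hS
  by_cases hq1 : q = 1
  · have hzero : (q - 1) * E.card = 0 := by
      rw [hq1]; simp
    have : (Finset.range m).filter (fun x => gfun s q E x = S) = ∅ := by
      apply Finset.filter_false_of_mem
      intro x hx
      simp only [Finset.mem_range] at hx
      apply hfirst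
      omega
    rw [this]
    simp [hq1]
  · have hq2 : 2 ≤ q := by omega
    have hset : (Finset.range m).filter (fun x => gfun s q E x = S)
        = (Finset.range m).filter (fun x => q * n1 ≤ x ∧ (x - q * n1) / (q - 1) = b) := by
      ext x
      simp only [Finset.mem_filter, Finset.mem_range]
      constructor
      · rintro ⟨hxm, hgx⟩
        have hge : ¬ (x < q * n1) := fun h => hfirst x h hgx
        refine ⟨by omega, by omega, ?_⟩
        unfold gfun at hgx
        rw [← hn1] at hgx
        rw [if_neg hge] at hgx
        have hlt : (x - q * n1) / (q - 1) < E.card := by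
          apply (Nat.div_lt_iff_lt_mul (by omega)).2
          have : E.card * (q - 1) = (q - 1) * E.card := by ring
          omega
        exact pick_inj _ hlt hb (hgx.trans hpick.symm)
      · rintro ⟨hxm, hge, hdiv⟩
        refine ⟨hxm, ?_⟩
        unfold gfun
        rw [← hn1, if_neg (by omega), hdiv]
        exact hpick
    rw [hset]
    have hbij : ((Finset.range m).filter (fun x => q * n1 ≤ x ∧ (x - q * n1) / (q - 1) = b)).card
        = ((Finset.range ((q - 1) * E.card)).filter (fun y => y / (q - 1) = b)).card := by
      apply Finset.card_nbij' (i := fun x => x - q * n1) (j := fun y => y + q * n1)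
      · intro x hx
        simp only [Finset.mem_coe, Finset.mem_filter, Finset.mem_range] at hx ⊢
        exact ⟨by omega, hx.2.2⟩
      · intro y hy
        simp only [Finset.mem_coe, Finset.mem_filter, Finset.mem_range] at hy ⊢
        refine ⟨by omega, by omega, ?_⟩
        rw [Nat.add_sub_cancel]
        exact hy.2
      · intro x hx
        simp only [Finset.mem_coe, Finset.mem_filter, Finset.mem_range] at hx
        beta_reduce; omega
      · intro y hy
        simp only [Finset.mem_coe, Finset.mem_filter, Finset.mem_range] at hy
        beta_reduce; omega
    rw [hbij]
    exact count_div _ (q - 1) b (by omega) (Nat.mul_le_mul_left (q - 1) hb)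

end gfunLemmas

def Dsum {t : ℕ} (d : Fin t → ℕ) (n : ℕ) : ℕ :=
  ∑ i ∈ Finset.range n, (if h : i < t then d ⟨i, h⟩ else 0)

lemma Dsum_mono {t : ℕ} (d : Fin t → ℕ) : Monotone (Dsum d) := by
  intro a b hab
  exact Finset.sum_le_sum_of_subset (Finset.range_subset_range.2 hab)

lemma Dsum_succ {t : ℕ} (d : Fin t → ℕ) {j : ℕ} (hj : j < t) :
    Dsum d (j + 1) = Dsum d j + d ⟨j, hj⟩ := by
  unfold Dsum
  rw [Finset.sum_range_succ, dif_pos hj]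

lemma Dsum_t {t : ℕ} (d : Fin t → ℕ) : Dsum d t = ∑ j : Fin t, d j := by
  unfold Dsum
  rw [Finset.sum_range]
  apply Finset.sum_congr rfl
  intro j _
  rw [dif_pos j.isLt]

def hfun {t : ℕ} (r : ℕ) (d : Fin t → ℕ) (p : ℕ) : Finset (Fin t) :=
  Finset.univ.filter (fun j => (p + (r - 1) * Dsum d j.val) % r < d j)

lemma hfun_cov {t : ℕ} {r : ℕ} (d : Fin t → ℕ) (hr : 0 < r) (hd : ∀ j, d j ≤ r) (j : Fin t) :
    ((Finset.range r).filter (fun p => j ∈ hfun r d p)).card = d j := by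
  have : ∀ p, (j ∈ hfun r d p) ↔ ((p + (r - 1) * Dsum d j.val) % r < d j) := by
    intro p
    unfold hfun
    simp
  rw [Finset.filter_congr (fun p _ => by rw [this p])]
  exact count_mod_lt r ((r - 1) * Dsum d j.val) (d j) hr (hd j)

lemma hfun_card {t r : ℕ} (d : Fin t → ℕ) (c : ℕ) (hr : 0 < r) (hd : ∀ j, d j ≤ r)
    (hsum : Dsum d t = c * r) {p : ℕ} (hp : p < r) :
    (hfun r d p).card = c := by
  classical
  set condN : ℕ → Prop := fun n => (p + (r - 1) * Dsum d n) % r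
      < (if h : n < t then d ⟨n, h⟩ else 0) with hcondN
  have hstep1 : (hfun r d p).card = ((Finset.range t).filter condN).card := by
    unfold hfun
    rw [← card_filter_fin_s17 t condN]
    apply congrArg
    apply Finset.filter_congr
    intro x _
    rw [hcondN]
    simp only [dif_pos x.isLt]
  set A := (Finset.range (c * r)).filter (fun x => x % r = p) with hA
  have hcardA : A.card = c := count_mod_eq c r p hp
  set Jx : ℕ → ℕ := fun x => Nat.findGreatest (fun j => Dsum d j ≤ x) t with hJx
  have hJ : ∀ x, x < c * r → Dsum d (Jx x) ≤ x ∧ x < Dsum d (Jx x + 1) ∧ Jx x < t := by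
    intro x hx
    have h0 : Dsum d 0 ≤ x := by simp [Dsum]
    have hspec : Dsum d (Jx x) ≤ x := by
      rw [hJx]
      exact Nat.findGreatest_spec (P := fun j => Dsum d j ≤ x) (Nat.zero_le t) h0
    have hle : Jx x ≤ t := by
      rw [hJx]
      exact Nat.findGreatest_le t
    have hlt : Jx x < t := by
      rcases Nat.lt_or_ge (Jx x) t with h | h
      · exact h
      · exfalso
        have : Jx x = t := by omega
        rw [this, hsum] at hspec
        omega
    refine ⟨hspec, ?_, hlt⟩
    by_contra h
    push_neg at h
    have h2 : Jx x + 1 ≤ Jx x := by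
      nth_rewrite 2 [hJx]
      exact Nat.le_findGreatest (P := fun j => Dsum d j ≤ x) (by omega) h
    omega
  have hchar : ∀ x, x < c * r → ∀ jn, jn < t →
      (Jx x = jn ↔ Dsum d jn ≤ x ∧ x < Dsum d (jn + 1)) := by
    intro x hx jn hjn
    constructor
    · intro h
      obtain ⟨h1, h2, _⟩ := hJ x hx
      rw [h] at h1 h2
      exact ⟨h1, h2⟩
    · rintro ⟨h1, h2⟩
      have hge : jn ≤ Jx x := by
        rw [hJx]
        exact Nat.le_findGreatest (P := fun j => Dsum d j ≤ x) (by omega) h1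
      have hle : Jx x ≤ jn := by
        by_contra h
        push_neg at h
        have hmono := Dsum_mono d (show jn + 1 ≤ Jx x by omega)
        have := (hJ x hx).1
        omega
      omega
  have hfiber : A.card = ∑ jn ∈ Finset.range t, (A.filter (fun x => Jx x = jn)).card := by
    apply Finset.card_eq_sum_card_fiberwise
    intro x hx
    rw [hA] at hx
    simp only [Finset.mem_coe, Finset.mem_filter, Finset.mem_range] at hx
    exact Finset.mem_range.2 (hJ x hx.1).2.2
  have hper : ∀ jn ∈ Finset.range t, (A.filter (fun x => Jx x = jn)).card
      = if condN jn then 1 else 0 := by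
    intro jn hjn
    rw [Finset.mem_range] at hjn
    set Dj := Dsum d jn with hDj
    set dj := d ⟨jn, hjn⟩ with hdj
    have hDsucc : Dsum d (jn + 1) = Dj + dj := Dsum_succ d hjn
    have hDle : Dsum d (jn + 1) ≤ c * r := by
      rw [← hsum]
      exact Dsum_mono d (by omega)
    have hdjr : dj ≤ r := hd _
    have hmul : (r - 1) * Dj + Dj = r * Dj := by
      have h1 : r - 1 + 1 = r := by omega
      calc (r - 1) * Dj + Dj = (r - 1 + 1) * Dj := by ring
        _ = r * Dj := by rw [h1]
    have hcond_eq : condN jn ↔ (p + (r - 1) * Dj) % r < dj := by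
      rw [hcondN]
      simp only [dif_pos hjn]; exact Iff.rfl
    have hset : A.filter (fun x => Jx x = jn)
        = (Finset.range (c * r)).filter (fun x => x % r = p ∧ Dj ≤ x ∧ x < Dj + dj) := by
      ext x
      rw [hA]
      simp only [Finset.mem_filter, Finset.mem_range]
      constructor
      · rintro ⟨⟨hx, hxp⟩, hJ⟩
        have := (hchar x hx jn hjn).1 hJ
        rw [hDsucc] at this
        exact ⟨hx, hxp, this⟩
      · rintro ⟨hx, hxp, h1, h2⟩
        refine ⟨⟨hx, hxp⟩, (hchar x hx jn hjn).2 ⟨h1, by rw [hDsucc]; exact h2⟩⟩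
    set cc := (p + (r - 1) * Dj) % r with hcc
    have hccr : cc < r := Nat.mod_lt _ hr
    -- any member x of the set equals Dj + cc
    have hmem_eq : ∀ x, x % r = p → Dj ≤ x → x < Dj + dj → x - Dj = cc := by
      intro x hxp h1 h2
      set w := x - Dj with hw
      have hwlt : w < dj := by omega
      have hx_eq : x = Dj + w := by omega
      have : cc = w := by
        rw [hcc, ← hxp, Nat.mod_add_mod]
        have he : x + (r - 1) * Dj = w + r * Dj := by omega
        rw [he, Nat.add_mul_mod_self_left w r Dj, Nat.mod_eq_of_lt (by omega)]
      omega
    by_cases hcond : condN jn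
    · rw [if_pos hcond]
      have hcclt : cc < dj := hcond_eq.1 hcond
      have hsing : (Finset.range (c * r)).filter (fun x => x % r = p ∧ Dj ≤ x ∧ x < Dj + dj)
          = {Dj + cc} := by
        ext x
        simp only [Finset.mem_filter, Finset.mem_range, Finset.mem_singleton]
        constructor
        · rintro ⟨hx, hxp, h1, h2⟩
          have := hmem_eq x hxp h1 h2
          omega
        · intro h
          subst h
          refine ⟨by omega, ?_, by omega, by omega⟩
          rw [hcc, Nat.add_mod_mod]
          have he : Dj + (p + (r - 1) * Dj) = p + r * Dj := by omega
          rw [he, Nat.add_mul_mod_self_left p r Dj, Nat.mod_eq_of_lt hp]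
      rw [hset, hsing, Finset.card_singleton]
    · rw [if_neg hcond]
      have hempty : (Finset.range (c * r)).filter (fun x => x % r = p ∧ Dj ≤ x ∧ x < Dj + dj)
          = ∅ := by
        apply Finset.eq_empty_of_forall_notMem
        intro x hx
        simp only [Finset.mem_filter, Finset.mem_range] at hx
        obtain ⟨hxr, hxp, h1, h2⟩ := hx
        have := hmem_eq x hxp h1 h2
        exact hcond (hcond_eq.2 (by omega))
      rw [hset, hempty, Finset.card_empty]
  have hsumA : A.card = ((Finset.range t).filter condN).card := by
    rw [hfiber, Finset.sum_congr rfl hper, ← Finset.card_filter]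
  rw [hstep1, ← hsumA, hcardA]

/-- If `tα = sk + r` with `s ≥ 1`, `0 ≤ r ≤ k-1` (and `α < k`, so `t ≥ s`),
then there exists a `k × t` binary matrix `M₀` such that each column has
exactly `α` ones, the minimum row weight is `s`, and
`Γ(M₀) = ⌈(k-r)/C(t,s)⌉`. -/
theorem stmt17 {k t α s r : ℕ} (hs : 1 ≤ s) (hr : r < k) (hαk : α < k)
    (heq : t * α = s * k + r) :
    ∃ M : Fin k → Fin t → Bool,
      (∀ j, (colSupp M j).card = α) ∧ wmin M = s ∧
      Gamma M = (k - r) ⌈/⌉ Nat.choose t s := by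
  classical
  have hk : 0 < k := by omega
  have hα : 0 < α := by
    by_contra h
    have hα0 : α = 0 := by omega
    rw [hα0, Nat.mul_zero] at heq
    have : 0 < s * k := Nat.mul_pos (by omega) hk
    omega
  have hts : s < t := by
    by_contra h
    push_neg at h
    have h1 : t * α ≤ s * α := Nat.mul_le_mul_right α h
    have h2 : s * α < s * k := by
      have h3 := Nat.mul_le_mul_left s (show α + 1 ≤ k by omega)
      have h4 : s * (α + 1) = s * α + s := by ring
      omega
    omega
  have hst : s ≤ t := by omega
  have ht : 0 < t := by omega
  set m := k - r with hm
  have hkm : k = m + r := by omega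
  have hm1 : 1 ≤ m := by omega
  set N := Nat.choose t s with hN
  have hN0 : 0 < N := Nat.choose_pos hst
  have hNcard : (Sall t s).card = N := card_Sall t s
  set q := m ⌈/⌉ N with hqdef
  have hq_eq : q = (m + N - 1) / N := Nat.ceilDiv_eq_add_pred_div m N
  have hq1 : m ≤ q * N := by
    have h1 := Nat.lt_mul_div_succ (m + N - 1) hN0
    have h2 : N * ((m + N - 1) / N + 1) = N * ((m + N - 1) / N) + N := by ring
    have h3 : q * N = N * ((m + N - 1) / N) := by rw [hq_eq]; ring
    omega
  have hq2 : q * N ≤ m + N - 1 := by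
    have h1 := Nat.div_mul_le_self (m + N - 1) N
    rw [hq_eq]
    omega
  have hq0 : 0 < q := by
    by_contra h
    have hq00 : q = 0 := by omega
    have : q * N = 0 := by rw [hq00]; ring
    omega
  set e := q * N - m with he
  have heN : e < N := by omega
  have hqN : q * N = m + e := by omega
  obtain ⟨E, hEsub, hEcard, hEbal⟩ := balanced_exists s e (by rw [hNcard]; omega)
  have hsumE : ∑ j, cov E j = e * s :=
    (sum_cov E (fun S hS => mem_Sall.1 (hEsub hS))).trans (by rw [hEcard])
  have hEcov : ∀ j : Fin t, t * cov E j < e * s + t ∧ e * s < t * cov E j + t := by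
    intro j
    have hsplit : ∑ j' : Fin t, cov E j' = cov E j + ∑ j' ∈ Finset.univ.erase j, cov E j' := by
      rw [add_comm, Finset.sum_erase_add _ _ (Finset.mem_univ j)]
    have hcard : (Finset.univ.erase j).card = t - 1 := by
      rw [Finset.card_erase_of_mem (Finset.mem_univ j), Finset.card_univ, Fintype.card_fin]
    have hlb : (t - 1) * (cov E j - 1) ≤ ∑ j' ∈ Finset.univ.erase j, cov E j' := by
      calc (t - 1) * (cov E j - 1) = ∑ _j' ∈ Finset.univ.erase j, (cov E j - 1) := by
            rw [Finset.sum_const, hcard, smul_eq_mul]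
        _ ≤ ∑ j' ∈ Finset.univ.erase j, cov E j' :=
            Finset.sum_le_sum (fun j' _ => by have := hEbal j j'; omega)
    have hub : ∑ j' ∈ Finset.univ.erase j, cov E j' ≤ (t - 1) * (cov E j + 1) := by
      calc ∑ j' ∈ Finset.univ.erase j, cov E j'
          ≤ ∑ _j' ∈ Finset.univ.erase j, (cov E j + 1) :=
            Finset.sum_le_sum (fun j' _ => by have := hEbal j' j; omega)
        _ = (t - 1) * (cov E j + 1) := by rw [Finset.sum_const, hcard, smul_eq_mul]
    constructor
    · rcases Nat.eq_zero_or_pos (cov E j) with h0 | h0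
      · have hz : t * cov E j = 0 := by rw [h0, Nat.mul_zero]
        omega
      · obtain ⟨b, hb⟩ : ∃ b, cov E j = b + 1 := ⟨cov E j - 1, by omega⟩
        have hy : cov E j - 1 = b := by omega
        rw [hy] at hlb
        have hx3 : (t - 1) * b + b = t * b := by
          have h1 : t - 1 + 1 = t := by omega
          calc (t - 1) * b + b = (t - 1 + 1) * b := by ring
            _ = t * b := by rw [h1]
        have hx4 : t * cov E j = t * b + t := by rw [hb]; ring
        omega
    · have hx1 : (t - 1) * (cov E j + 1) + (cov E j + 1) = t * (cov E j + 1) := by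
        have h1 : t - 1 + 1 = t := by omega
        calc (t - 1) * (cov E j + 1) + (cov E j + 1) = (t - 1 + 1) * (cov E j + 1) := by ring
          _ = t * (cov E j + 1) := by rw [h1]
      have hx2 : t * (cov E j + 1) = t * cov E j + t := by ring
      omega
  -- the weight-s part
  set g : ℕ → Finset (Fin t) := gfun s q E with hg
  have hn1 : (Sall t s \ E).card = N - e := by
    rw [Finset.card_sdiff_of_subset hEsub, hNcard, hEcard]
  have hmm : q * (Sall t s \ E).card + (q - 1) * E.card = m := by
    rw [hn1, hEcard]
    have h1 : q * (N - e) + q * e = q * N := by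
      rw [← Nat.mul_add]
      congr 1
      omega
    have h2 : (q - 1) * e + e = q * e := by
      have h3 : q - 1 + 1 = q := by omega
      calc (q - 1) * e + e = (q - 1 + 1) * e := by ring
        _ = q * e := by rw [h3]
    omega
  have hgmem : ∀ x, x < m → g x ∈ Sall t s := by
    intro x hx
    exact gfun_mem hq0 hEsub (by omega)
  have hgcount_notin : ∀ S ∈ Sall t s \ E,
      ((Finset.range m).filter (fun x => g x = S)).card = q := by
    intro S hS
    rw [← hmm]
    exact gfun_count_notin hq0 (by omega) hS
  have hgcount_in : ∀ S ∈ E,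
      ((Finset.range m).filter (fun x => g x = S)).card = q - 1 := by
    intro S hS
    rw [← hmm]
    exact gfun_count_in hq0 hEsub hS
  -- coverage of columns by the weight-s rows
  set cfun : Fin t → ℕ := fun j => ((Finset.range m).filter (fun x => j ∈ g x)).card
    with hcfun
  have hckey : ∀ j : Fin t, cfun j + cov E j = q * cov (Sall t s) j := by
    intro j
    have hfib : cfun j = ∑ S ∈ (Sall t s).filter (fun S => j ∈ S),
        ((Finset.range m).filter (fun x => g x = S)).card := by
      show ((Finset.range m).filter (fun x => j ∈ g x)).card = _
      rw [Finset.card_eq_sum_card_fiberwise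
        (f := fun x => g x) (t := (Sall t s).filter (fun S => j ∈ S))
        (fun x hx => by
          simp only [Finset.mem_coe, Finset.mem_filter, Finset.mem_range] at hx
          exact Finset.mem_filter.2 ⟨hgmem x hx.1, hx.2⟩)]
      apply Finset.sum_congr rfl
      intro S hS
      congr 1
      rw [Finset.filter_filter]
      apply Finset.filter_congr
      intro x _
      simp only [Finset.mem_filter] at hS
      constructor
      · rintro ⟨_, h⟩; exact h
      · intro h; exact ⟨by rw [h]; exact hS.2, h⟩
    have hsplitS : (Sall t s).filter (fun S => j ∈ S)
        = ((Sall t s \ E).filter (fun S => j ∈ S)) ∪ (E.filter (fun S => j ∈ S)) := by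
      rw [← Finset.filter_union, Finset.sdiff_union_of_subset hEsub]
    have hdisj : Disjoint ((Sall t s \ E).filter (fun S => j ∈ S))
        (E.filter (fun S => j ∈ S)) := by
      apply Finset.disjoint_filter_filter
      exact Finset.sdiff_disjoint
    have hsum_split : cfun j
        = ∑ S ∈ (Sall t s \ E).filter (fun S => j ∈ S),
            ((Finset.range m).filter (fun x => g x = S)).card
          + ∑ S ∈ E.filter (fun S => j ∈ S),
            ((Finset.range m).filter (fun x => g x = S)).card := by
      rw [hfib, hsplitS, Finset.sum_union hdisj]
    have hsum1 : ∑ S ∈ (Sall t s \ E).filter (fun S => j ∈ S),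
        ((Finset.range m).filter (fun x => g x = S)).card
        = ((Sall t s \ E).filter (fun S => j ∈ S)).card * q := by
      rw [Finset.sum_congr rfl (fun S hS => hgcount_notin S (Finset.mem_filter.1 hS).1),
        Finset.sum_const, smul_eq_mul]
    have hsum2 : ∑ S ∈ E.filter (fun S => j ∈ S),
        ((Finset.range m).filter (fun x => g x = S)).card
        = cov E j * (q - 1) := by
      rw [Finset.sum_congr rfl (fun S hS => hgcount_in S (Finset.mem_filter.1 hS).1),
        Finset.sum_const, smul_eq_mul]
      rfl
    have hcards : ((Sall t s \ E).filter (fun S => j ∈ S)).card + cov E j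
        = cov (Sall t s) j := by
      unfold cov
      rw [← Finset.card_union_of_disjoint hdisj, ← Finset.filter_union,
        Finset.sdiff_union_of_subset hEsub]
    set A1 := ((Sall t s \ E).filter (fun S => j ∈ S)).card with hA1
    have hexp1 : A1 * q + cov E j * q = cov (Sall t s) j * q := by
      rw [← Nat.add_mul, hcards]
    have hexp2 : cov E j * (q - 1) + cov E j = cov E j * q := by
      have h3 : q - 1 + 1 = q := by omega
      calc cov E j * (q - 1) + cov E j = cov E j * (q - 1 + 1) := by ring
        _ = cov E j * q := by rw [h3]
    have hexp3 : cov (Sall t s) j * q = q * cov (Sall t s) j := by ring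
    omega
  -- per-column bounds
  have htα : t * α = s * m + s * r + r := by
    have h1 : s * k = s * m + s * r := by rw [hkm]; ring
    omega
  have hcbounds : ∀ j : Fin t, cfun j ≤ α ∧ α ≤ cfun j + r := by
    intro j
    have hkey : t * cfun j + t * cov E j = s * m + s * e := by
      have h1 := t_mul_cov_Sall (s := s) j
      rw [← hN] at h1
      have h2 : t * cfun j + t * cov E j = t * (cfun j + cov E j) := by ring
      rw [h2, hckey j]
      have h3 : t * (q * cov (Sall t s) j) = q * (t * cov (Sall t s) j) := by ring
      rw [h3, h1]
      have h5 : q * (s * N) = s * (q * N) := by ring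
      rw [h5, hqN]
      ring
    have hcov_lb := (hEcov j).2
    have hcov_ub := (hEcov j).1
    have hes : e * s = s * e := by ring
    constructor
    · have h6 : t * cfun j < t * (α + 1) := by
        have h7 : t * (α + 1) = t * α + t := by ring
        omega
      have := Nat.lt_of_mul_lt_mul_left h6
      omega
    · have hsr : (s + 1) * r ≤ t * r := Nat.mul_le_mul_right r (by omega)
      have hsr2 : (s + 1) * r = s * r + r := by ring
      have h6 : t * α < t * (cfun j + r + 1) := by
        have h7 : t * (cfun j + r + 1) = t * cfun j + t * r + t := by ring
        omega
      have := Nat.lt_of_mul_lt_mul_left h6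
      omega
  -- total coverage of weight-s rows
  have hsum_c : ∑ j : Fin t, cfun j = s * m := by
    have h1 : ∑ j : Fin t, (cfun j + cov E j) = ∑ j : Fin t, q * cov (Sall t s) j :=
      Finset.sum_congr rfl (fun j _ => hckey j)
    rw [Finset.sum_add_distrib, hsumE] at h1
    have h2 : ∑ j : Fin t, q * cov (Sall t s) j = q * ∑ j : Fin t, cov (Sall t s) j := by
      rw [Finset.mul_sum]
    have h3 : ∑ j : Fin t, cov (Sall t s) j = N * s := by
      rw [sum_cov (Sall t s) (fun S hS => mem_Sall.1 hS), hNcard]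
    rw [h2, h3] at h1
    have h4 : q * (N * s) = s * m + s * e := by
      have h5 : q * (N * s) = s * (q * N) := by ring
      rw [h5, hqN]; ring
    have hes : e * s = s * e := by ring
    omega
  -- residual degrees
  set dfun : Fin t → ℕ := fun j => α - cfun j with hdfun
  have hd_sum_pt : ∀ j, dfun j + cfun j = α := by
    intro j
    have := (hcbounds j).1
    simp only [hdfun]
    omega
  have hd_le_r : ∀ j, dfun j ≤ r := by
    intro j
    have := (hcbounds j).2
    simp only [hdfun]
    omega
  have hDsum : Dsum dfun t = (s + 1) * r := by
    rw [Dsum_t]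
    have h1 : ∑ j : Fin t, (dfun j + cfun j) = ∑ _j : Fin t, α :=
      Finset.sum_congr rfl (fun j _ => hd_sum_pt j)
    rw [Finset.sum_add_distrib, hsum_c, Finset.sum_const, Finset.card_univ,
      Fintype.card_fin, smul_eq_mul] at h1
    have h2 : (s + 1) * r = s * r + r := by ring
    omega
  have hhcov : ∀ j : Fin t, ((Finset.range r).filter (fun p => j ∈ hfun r dfun p)).card
      = dfun j := by
    rcases Nat.eq_zero_or_pos r with h0 | h0
    · intro j
      rw [h0]
      simp only [Finset.range_zero, Finset.filter_empty, Finset.card_empty]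
      have := hd_le_r j
      omega
    · exact fun j => hfun_cov dfun h0 hd_le_r j
  have hhcard : ∀ p, p < r → (hfun r dfun p).card = s + 1 := by
    intro p hp
    exact hfun_card dfun (s + 1) (by omega) hd_le_r hDsum hp
  -- the matrix
  set suppN : ℕ → Finset (Fin t) := fun n => if n < r then hfun r dfun n else g (n - r)
    with hsuppN
  set M : Fin k → Fin t → Bool := fun i j => decide (j ∈ suppN i.val) with hM
  have hrowSupp : ∀ i : Fin k, rowSupp M i = suppN i.val := by
    intro i
    unfold rowSupp
    ext j
    simp [hM]
  have hcard_lt : ∀ n, n < r → (suppN n).card = s + 1 := by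
    intro n hn
    simp only [hsuppN, if_pos hn]
    exact hhcard n hn
  have hcard_ge : ∀ n, r ≤ n → n < k → (suppN n).card = s := by
    intro n h1 h2
    simp only [hsuppN, if_neg (by omega : ¬ n < r)]
    exact mem_Sall.1 (hgmem (n - r) (by omega))
  have hwmin : wmin M = s := by
    unfold wmin
    have hmem : s ∈ {w | ∃ i : Fin k, w = (rowSupp M i).card} := by
      refine ⟨⟨r, hr⟩, ?_⟩
      rw [hrowSupp]
      exact (hcard_ge r (le_refl r) hr).symm
    apply le_antisymm
    · exact Nat.sInf_le hmem
    · apply le_csInf ⟨s, hmem⟩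
      rintro w ⟨i, hw⟩
      rw [hrowSupp] at hw
      rcases Nat.lt_or_ge i.val r with h | h
      · rw [hcard_lt i.val h] at hw; omega
      · rw [hcard_ge i.val h i.isLt] at hw; omega
  have hcol : ∀ j, (colSupp M j).card = α := by
    intro j
    have h1 : colSupp M j = Finset.univ.filter (fun i : Fin k => j ∈ suppN i.val) := by
      unfold colSupp; ext i; simp [hM]
    rw [h1, card_split k r (by omega) (fun n => j ∈ suppN n)]
    have h2 : (Finset.univ.filter (fun p : Fin r => j ∈ suppN p.val)).card = dfun j := by
      have hcong : ∀ p : Fin r, (j ∈ suppN p.val) ↔ (j ∈ hfun r dfun p.val) := by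
        intro p
        simp only [hsuppN, if_pos p.isLt]
      rw [Finset.filter_congr (fun p _ => hcong p),
        card_filter_fin_s17 r (fun n => j ∈ hfun r dfun n)]
      exact hhcov j
    have h3 : (Finset.univ.filter (fun x : Fin (k - r) => j ∈ suppN (r + x.val))).card
        = cfun j := by
      have hcong : ∀ x : Fin (k - r), (j ∈ suppN (r + x.val)) ↔ (j ∈ g x.val) := by
        intro x
        simp only [hsuppN, if_neg (by omega : ¬ r + x.val < r), Nat.add_sub_cancel_left]
      rw [Finset.filter_congr (fun x _ => hcong x),
        card_filter_fin_s17 (k - r) (fun n => j ∈ g n)]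
    rw [h2, h3]
    have := hd_sum_pt j
    omega
  have hcount : ∀ S : Finset (Fin t), S.card = s →
      (Finset.univ.filter (fun i : Fin k => suppN i.val = S)).card
        = ((Finset.range m).filter (fun x => g x = S)).card := by
    intro S hScard
    rw [card_split k r (by omega) (fun n => suppN n = S)]
    have h2 : (Finset.univ.filter (fun p : Fin r => suppN p.val = S)).card = 0 := by
      rw [Finset.card_eq_zero]
      apply Finset.filter_false_of_mem
      intro p _
      intro hps
      have := hcard_lt p.val p.isLt
      rw [hps, hScard] at this
      omega
    have h3 : (Finset.univ.filter (fun x : Fin (k - r) => suppN (r + x.val) = S)).card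
        = ((Finset.range m).filter (fun x => g x = S)).card := by
      have hcong : ∀ x : Fin (k - r), (suppN (r + x.val) = S) ↔ (g x.val = S) := by
        intro x
        simp only [hsuppN, if_neg (by omega : ¬ r + x.val < r), Nat.add_sub_cancel_left]
      rw [Finset.filter_congr (fun x _ => hcong x),
        card_filter_fin_s17 (k - r) (fun n => g n = S)]
    rw [h2, h3]
    omega
  have hmult_le : ∀ S ∈ Sall t s, ((Finset.range m).filter (fun x => g x = S)).card ≤ q := by
    intro S hS
    by_cases hSE : S ∈ E
    · rw [hgcount_in S hSE]; omega
    · rw [hgcount_notin S (Finset.mem_sdiff.2 ⟨hS, hSE⟩)]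
  have hGamma : Gamma M = q := by
    unfold Gamma
    apply le_antisymm
    · apply Finset.sup_le
      intro i _
      by_cases hif : (rowSupp M i).card = wmin M
      · rw [if_pos hif]
        have hSs : (suppN i.val).card = s := by
          rw [← hrowSupp i, hif, hwmin]
        have hcong : Finset.univ.filter (fun i' : Fin k => rowSupp M i' = rowSupp M i)
            = Finset.univ.filter (fun i' : Fin k => suppN i'.val = suppN i.val) := by
          apply Finset.filter_congr
          intro i' _
          rw [hrowSupp i', hrowSupp i]
        rw [hcong, hcount (suppN i.val) hSs]
        exact hmult_le _ (mem_Sall.2 hSs)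
      · rw [if_neg hif]
        omega
    · have hSne : (Sall t s \ E).Nonempty := by
        apply Finset.card_pos.1
        rw [hn1]
        omega
      obtain ⟨S₀, hS₀⟩ := hSne
      have hcnt₀ : ((Finset.range m).filter (fun x => g x = S₀)).card = q :=
        hgcount_notin S₀ hS₀
      obtain ⟨x₀, hx₀⟩ := Finset.card_pos.1 (show 0 < ((Finset.range m).filter
        (fun x => g x = S₀)).card by rw [hcnt₀]; omega)
      simp only [Finset.mem_filter, Finset.mem_range] at hx₀
      have hik : r + x₀ < k := by omega
      set i₀ : Fin k := ⟨r + x₀, hik⟩ with hi₀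
      have hsupp₀ : suppN i₀.val = S₀ := by
        simp only [hi₀, hsuppN, if_neg (by omega : ¬ r + x₀ < r), Nat.add_sub_cancel_left]
        exact hx₀.2
      have hScard₀ : S₀.card = s := mem_Sall.1 (Finset.mem_sdiff.1 hS₀).1
      have hif : (rowSupp M i₀).card = wmin M := by
        rw [hrowSupp, hsupp₀, hScard₀, hwmin]
      have hval : (if (rowSupp M i₀).card = wmin M then
          (Finset.univ.filter (fun i' => rowSupp M i' = rowSupp M i₀)).card else 0) = q := by
        rw [if_pos hif]
        have hcong : Finset.univ.filter (fun i' : Fin k => rowSupp M i' = rowSupp M i₀)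
            = Finset.univ.filter (fun i' : Fin k => suppN i'.val = suppN i₀.val) := by
          apply Finset.filter_congr
          intro i' _
          rw [hrowSupp i', hrowSupp i₀]
        rw [hcong, hsupp₀, hcount S₀ hScard₀, hcnt₀]
      rw [← hval]
      exact Finset.le_sup (f := fun i : Fin k =>
        if (rowSupp M i).card = wmin M then
          (Finset.univ.filter (fun i' => rowSupp M i' = rowSupp M i)).card
        else 0) (Finset.mem_univ i₀)
  exact ⟨M, hcol, hwmin, hGamma⟩
end

section
/- Let β > α ≥ 1 and let M0 be a k×t binary matrix with every column of weight exactly α and every row nonzero. Let M be obtained from M0 by replicating each column β times (so M is k×n with n = tβ), and let i_0 = t − w_min(M0). Define δ_0 as the smallest δ with 0 ≤ δ ≤ n−k such that for all ℓ ∈ [k] and all J ⊆ [n] with |J| = ℓ+δ, |⋃_{j∈J} C_M(j)| ≥ ℓ. Then δ_0 = i_0·β − (k − Γ(M0)) = n − w_min(M0)·β − k + Γ(M0). -/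
/-- `δ₀`: the smallest `δ` with `0 ≤ δ ≤ n - k` such that every `ℓ + δ`
columns of `M` (with `ℓ ∈ [k]`) have supports whose union has size `≥ ℓ`. -/
noncomputable def delta0 {k n : ℕ} (M : Fin k → Fin n → Bool) : ℕ :=
  sInf {δ : ℕ | δ ≤ n - k ∧ ∀ ℓ : ℕ, 1 ≤ ℓ → ℓ ≤ k →
    ∀ J : Finset (Fin n), J.card = ℓ + δ → ℓ ≤ (J.biUnion (colSupp M)).card}

/- ### Auxiliary lemmas -/

open Finset in
lemma stmt19_countfib {t β : ℕ} (s : Finset (Fin t)) :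
    (Finset.univ.filter (fun j : Fin (t*β) => j.divNat ∈ s)).card = β * s.card := by
  rw [Finset.card_equiv (finProdFinEquiv.symm) (t := (s ×ˢ Finset.univ))]
  · rw [Finset.card_product, Finset.card_univ, Fintype.card_fin, Nat.mul_comm]
  · intro j; simp [finProdFinEquiv_symm_apply]

section stmt19aux
variable {k t : ℕ} (M0 : Fin k → Fin t → Bool)

lemma stmt19_wmin_le (i : Fin k) : wmin M0 ≤ (rowSupp M0 i).card := Nat.sInf_le ⟨i, rfl⟩

lemma stmt19_exists_wmin (hk : 0 < k) : ∃ i : Fin k, (rowSupp M0 i).card = wmin M0 := by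
  have h : {w | ∃ i : Fin k, w = (rowSupp M0 i).card}.Nonempty := ⟨_, ⟨⟨0, hk⟩, rfl⟩⟩
  obtain ⟨i, hi⟩ := Nat.sInf_mem h
  exact ⟨i, hi.symm⟩

lemma stmt19_card_le_Gamma {i0 : Fin k} (h : (rowSupp M0 i0).card = wmin M0)
    {T : Finset (Fin k)} (hT : ∀ i ∈ T, rowSupp M0 i = rowSupp M0 i0) :
    T.card ≤ Gamma M0 := by
  calc T.card ≤ (Finset.univ.filter (fun i' => rowSupp M0 i' = rowSupp M0 i0)).card := by
        apply Finset.card_le_card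
        intro i hi; simp [hT i hi]
    _ ≤ Gamma M0 := by
        have := Finset.le_sup (f := fun i : Fin k =>
          if (rowSupp M0 i).card = wmin M0 then
            (Finset.univ.filter (fun i' => rowSupp M0 i' = rowSupp M0 i)).card
          else 0) (Finset.mem_univ i0)
        simp only [h, if_true] at this; exact this

lemma stmt19_Gamma_ge_one (hk : 0 < k) : 1 ≤ Gamma M0 := by
  obtain ⟨i0, hi0⟩ := stmt19_exists_wmin M0 hk
  have hmem : i0 ∈ Finset.univ.filter (fun i' => rowSupp M0 i' = rowSupp M0 i0) := by simp
  have hpos : 1 ≤ (Finset.univ.filter (fun i' => rowSupp M0 i' = rowSupp M0 i0)).card :=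
    Finset.card_pos.mpr ⟨i0, hmem⟩
  have := Finset.le_sup (f := fun i : Fin k =>
      if (rowSupp M0 i).card = wmin M0 then
        (Finset.univ.filter (fun i' => rowSupp M0 i' = rowSupp M0 i)).card
      else 0) (Finset.mem_univ i0)
  simp only [hi0, if_true] at this
  unfold Gamma
  omega

lemma stmt19_Gamma_le_alpha {α : ℕ} (hcol : ∀ j, (colSupp M0 j).card = α)
    (hrow : ∀ i, (rowSupp M0 i).Nonempty) : Gamma M0 ≤ α := by
  apply Finset.sup_le
  intro i _
  split
  · obtain ⟨j, hj⟩ := hrow i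
    calc (Finset.univ.filter (fun i' => rowSupp M0 i' = rowSupp M0 i)).card
        ≤ (colSupp M0 j).card := by
          apply Finset.card_le_card
          intro i' hi'
          simp only [Finset.mem_filter, Finset.mem_univ, true_and] at hi'
          have : j ∈ rowSupp M0 i' := hi' ▸ hj
          simpa [colSupp, rowSupp] using this
      _ = α := hcol j
  · omega

lemma stmt19_Gamma_le_k : Gamma M0 ≤ k := by
  apply Finset.sup_le
  intro i _
  split
  · exact le_trans (Finset.card_le_univ _) (by simp)
  · omega

lemma stmt19_Gamma_achiever (hk : 0 < k) :
    ∃ i0 : Fin k, (rowSupp M0 i0).card = wmin M0 ∧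
      Gamma M0 = (Finset.univ.filter (fun i' => rowSupp M0 i' = rowSupp M0 i0)).card := by
  haveI : Nonempty (Fin k) := ⟨⟨0, hk⟩⟩
  obtain ⟨i0, _, hsup⟩ := Finset.exists_mem_eq_sup Finset.univ
    (Finset.univ_nonempty (α := Fin k)) (fun i : Fin k =>
      if (rowSupp M0 i).card = wmin M0 then
        (Finset.univ.filter (fun i' => rowSupp M0 i' = rowSupp M0 i)).card
      else 0)
  by_cases h : (rowSupp M0 i0).card = wmin M0
  · refine ⟨i0, h, ?_⟩
    rw [show Gamma M0 = _ from hsup, if_pos h]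
  · exfalso
    have h1 := stmt19_Gamma_ge_one M0 hk
    have : Gamma M0 = 0 := by rw [show Gamma M0 = _ from hsup, if_neg h]
    omega

/-- Key counting inequality: any nonempty set `T` of rows satisfies
`|T| + β·w ≤ Γ + β·|⋃_{i∈T} rowSupp i|`. -/
lemma stmt19_key {α β : ℕ} (hαβ : α < β)
    (hcol : ∀ j, (colSupp M0 j).card = α)
    (hrow : ∀ i, (rowSupp M0 i).Nonempty) :
    ∀ T : Finset (Fin k), T.Nonempty →
      T.card + β * wmin M0 ≤ Gamma M0 + β * (T.biUnion (rowSupp M0)).card := by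
  intro T
  induction T using Finset.strongInduction with
  | _ T ih =>
    intro hT
    obtain ⟨i0, hi0⟩ := hT
    set U := T.biUnion (rowSupp M0) with hU
    have hsub : ∀ i ∈ T, rowSupp M0 i ⊆ U := fun i hi => Finset.subset_biUnion_of_mem _ hi
    have hwle : ∀ i ∈ T, wmin M0 ≤ (rowSupp M0 i).card := fun i _ => stmt19_wmin_le M0 i
    have hwU : wmin M0 ≤ U.card :=
      le_trans (hwle i0 hi0) (Finset.card_le_card (hsub i0 hi0))
    rcases Nat.lt_or_ge (wmin M0) U.card with hlt | hge
    · -- inductive case: U.card > wmin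
      have hUne : U.Nonempty := Finset.card_pos.mp (by omega)
      obtain ⟨j, hj⟩ := hUne
      obtain ⟨i1, hi1T, hi1j⟩ := Finset.mem_biUnion.mp hj
      set T' := T.filter (fun i => ¬ M0 i j) with hT'
      have hcardsplit : (T.filter (fun i => M0 i j)).card + T'.card = T.card :=
        Finset.card_filter_add_card_filter_not _
      have hsubcol : T.filter (fun i => M0 i j) ⊆ colSupp M0 j := by
        intro i hi
        simp only [Finset.mem_filter] at hi
        simp [colSupp, hi.2]
      have hle_alpha : (T.filter (fun i => M0 i j)).card ≤ α := by
        rw [← hcol j]; exact Finset.card_le_card hsubcol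
      have hss : T' ⊂ T := by
        constructor
        · exact Finset.filter_subset _ _
        · intro hTT'
          have := hTT' hi1T
          rw [hT', Finset.mem_filter] at this
          have hj' : M0 i1 j := by
            have := hi1j; simpa [rowSupp] using this
          exact this.2 hj'
      rcases Finset.eq_empty_or_nonempty T' with he | hne
      · have : T.card ≤ α := by
          have : T'.card = 0 := by rw [he]; simp
          omega
        have h1 : β * (wmin M0 + 1) ≤ β * U.card := Nat.mul_le_mul_left β (by omega)
        have h2 : β * (wmin M0 + 1) = β * wmin M0 + β := by ring
        omega
      · have hihT := ih T' hss hne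
        set U' := T'.biUnion (rowSupp M0) with hU'
        have hU'sub : U' ⊂ U := by
          constructor
          · apply Finset.biUnion_subset_biUnion_of_subset_left
            exact Finset.filter_subset _ _
          · intro hcon
            have hjin : j ∈ U' := hcon hj
            obtain ⟨i2, hi2, hji2⟩ := Finset.mem_biUnion.mp hjin
            rw [hT', Finset.mem_filter] at hi2
            have : M0 i2 j := by simpa [rowSupp] using hji2
            exact hi2.2 this
        have hcardlt : U'.card < U.card := Finset.card_lt_card hU'sub
        have hmul : β * (U'.card + 1) ≤ β * U.card := Nat.mul_le_mul_left β (by omega)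
        have h2 : β * (U'.card + 1) = β * U'.card + β := by ring
        omega
    · -- base case: all rows in T have the same (minimum-weight) support
      have hall : ∀ i ∈ T, rowSupp M0 i = U := by
        intro i hi
        apply Finset.eq_of_subset_of_card_le (hsub i hi)
        exact le_trans hge (hwle i hi)
      have hUw : U.card = wmin M0 := by
        have h1 := hall i0 hi0
        have h2 := hwle i0 hi0
        rw [h1] at h2
        omega
      have hi0card : (rowSupp M0 i0).card = wmin M0 := by rw [hall i0 hi0, hUw]
      have hΓ : T.card ≤ Gamma M0 := by
        apply stmt19_card_le_Gamma M0 hi0card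
        intro i hi
        rw [hall i hi, hall i0 hi0]
      have hmm : β * U.card = β * wmin M0 := by rw [hUw]
      omega

end stmt19aux

/-- Let `β > α ≥ 1`, let `M₀` be a `k × t` binary matrix with every column of
weight exactly `α` and every row nonzero (so `⋃` of the column supports is
`[k]`, `tα ≥ k`), and let `M` be obtained from `M₀` by replicating each
column `β` times (so `M` is `k × n` with `n = tβ`). With
`i₀ = t - w_min(M₀)`, the quantity `δ₀` defined above satisfies
`δ₀ = i₀β - (k - Γ(M₀)) = n - w_min(M₀)·β - k + Γ(M₀)`. -/
theorem stmt19 {k t α β : ℕ} (hα : 1 ≤ α) (hαβ : α < β) (hk : 0 < k)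
    (M0 : Fin k → Fin t → Bool)
    (hcol : ∀ j, (colSupp M0 j).card = α)
    (hrow : ∀ i, (rowSupp M0 i).Nonempty)
    (hktα : k ≤ t * α)
    (M : Fin k → Fin (t * β) → Bool)
    (hM : ∀ (i : Fin k) (j : ℕ) (hj : j < t * β),
      M i ⟨j, hj⟩ = M0 i ⟨j / β, Nat.div_lt_of_lt_mul
        (Nat.lt_of_lt_of_eq hj (Nat.mul_comm t β))⟩) :
    delta0 M = (t - wmin M0) * β - (k - Gamma M0) ∧
    (delta0 M : ℤ) = (t * β : ℤ) - (wmin M0 : ℤ) * (β : ℤ) - (k : ℤ) +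
      (Gamma M0 : ℤ) := by
  -- basic numeric facts
  obtain ⟨iw, hiw⟩ := stmt19_exists_wmin M0 hk
  have hw1 : 1 ≤ wmin M0 := by
    rw [← hiw]; exact Finset.card_pos.mpr (hrow iw)
  have hwt : wmin M0 ≤ t := by
    rw [← hiw]; exact le_trans (Finset.card_le_univ _) (by simp)
  have hΓα : Gamma M0 ≤ α := stmt19_Gamma_le_alpha M0 hcol hrow
  have hΓ1 : 1 ≤ Gamma M0 := stmt19_Gamma_ge_one M0 hk
  have hΓk : Gamma M0 ≤ k := stmt19_Gamma_le_k M0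
  -- relating M and M0
  have hMdv : ∀ (i : Fin k) (j : Fin (t*β)), M i j = M0 i (Fin.divNat j) := by
    intro i j
    cases j with
    | mk jv hj => rw [hM i jv hj]; rfl
  have hcolM : ∀ j : Fin (t*β), colSupp M j = colSupp M0 (Fin.divNat j) := by
    intro j; ext i; simp [colSupp, hMdv]
  have cardA : ∀ S : Finset (Fin k),
      (Finset.univ.filter (fun j : Fin (t*β) => colSupp M j ⊆ S)).card
        = β * (Finset.univ.filter (fun c => colSupp M0 c ⊆ S)).card := by
    intro S
    have he : (Finset.univ.filter (fun j : Fin (t*β) => colSupp M j ⊆ S))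
        = (Finset.univ.filter (fun j : Fin (t*β) =>
            Fin.divNat j ∈ Finset.univ.filter (fun c => colSupp M0 c ⊆ S))) := by
      apply Finset.filter_congr
      intro j _
      simp [hcolM j]
    rw [he, stmt19_countfib]
  have cardA0compl : ∀ S : Finset (Fin k),
      (Finset.univ.filter (fun c => colSupp M0 c ⊆ S)).card
        + ((Sᶜ).biUnion (rowSupp M0)).card = t := by
    intro S
    have he : Finset.univ.filter (fun c : Fin t => colSupp M0 c ⊆ S)
        = ((Sᶜ).biUnion (rowSupp M0))ᶜ := by
      ext c
      simp only [Finset.mem_filter, Finset.mem_univ, true_and, Finset.mem_compl,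
        Finset.mem_biUnion, not_exists, Finset.subset_iff, colSupp, rowSupp, not_and]
      constructor
      · intro h i hiS hM0
        exact hiS (h hM0)
      · intro h i hM0
        by_contra hiS
        exact h i hiS hM0
    rw [he]
    simpa using Finset.card_compl_add_card ((Sᶜ).biUnion (rowSupp M0))
  have hfull : (Finset.univ.biUnion (rowSupp M0)) = (Finset.univ : Finset (Fin t)) := by
    apply Finset.eq_univ_iff_forall.mpr
    intro c
    have hcne : (colSupp M0 c).Nonempty := Finset.card_pos.mp (by rw [hcol c]; omega)
    obtain ⟨i, hi⟩ := hcne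
    have : M0 i c := by simpa [colSupp] using hi
    exact Finset.mem_biUnion.mpr ⟨i, Finset.mem_univ i, by simpa [rowSupp] using this⟩
  have hkey := stmt19_key M0 hαβ hcol hrow
  have hkuniv : k + β * wmin M0 ≤ Gamma M0 + β * t := by
    have := hkey Finset.univ ⟨⟨0, hk⟩, Finset.mem_univ _⟩
    rw [hfull] at this
    simpa [Finset.card_univ] using this
  -- the claimed value of delta0
  set D := β * (t - wmin M0) + Gamma M0 - k with hDdef
  have h2 : β * (t - wmin M0) + β * wmin M0 = β * t := by
    rw [← Nat.mul_add, Nat.sub_add_cancel hwt]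
  have hDk : D + k = β * (t - wmin M0) + Gamma M0 := by omega
  have hcomm : β * t = t * β := Nat.mul_comm β t
  have hβw : β ≤ β * wmin M0 := Nat.le_mul_of_pos_right β hw1
  have hDle : D ≤ t * β - k := by omega
  have hDmem : D ∈ {δ : ℕ | δ ≤ t * β - k ∧ ∀ ℓ : ℕ, 1 ≤ ℓ → ℓ ≤ k →
      ∀ J : Finset (Fin (t * β)), J.card = ℓ + δ → ℓ ≤ (J.biUnion (colSupp M)).card} := by
    refine ⟨hDle, ?_⟩
    intro ℓ hℓ1 hℓk J hJ
    by_contra hc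
    push_neg at hc
    set U' := J.biUnion (colSupp M) with hU'
    have hU'k : U'.card ≤ k := le_trans (Finset.card_le_univ _) (by simp)
    have hTcard : (U'ᶜ).card + U'.card = k := by
      simpa using Finset.card_compl_add_card U'
    have hTne : (U'ᶜ).Nonempty := Finset.card_pos.mp (by omega)
    have hJsub : J ⊆ Finset.univ.filter (fun j => colSupp M j ⊆ U') := by
      intro j hj
      simp only [Finset.mem_filter, Finset.mem_univ, true_and]
      exact fun i hi => Finset.mem_biUnion.mpr ⟨j, hj, hi⟩
    have hJcard : J.card ≤ β * (Finset.univ.filter (fun c => colSupp M0 c ⊆ U')).card := by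
      rw [← cardA U']
      exact Finset.card_le_card hJsub
    have hA0c := cardA0compl U'
    have hkeyT := hkey (U'ᶜ) hTne
    have hmulsum : β * (Finset.univ.filter (fun c => colSupp M0 c ⊆ U')).card
        + β * ((U'ᶜ).biUnion (rowSupp M0)).card = β * t := by
      rw [← Nat.mul_add, hA0c]
    omega
  have hlb : ∀ d ∈ {δ : ℕ | δ ≤ t * β - k ∧ ∀ ℓ : ℕ, 1 ≤ ℓ → ℓ ≤ k →
      ∀ J : Finset (Fin (t * β)), J.card = ℓ + δ → ℓ ≤ (J.biUnion (colSupp M)).card},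
      D ≤ d := by
    intro d hd
    by_contra hcon
    push_neg at hcon
    obtain ⟨i0, hi0w, hi0G⟩ := stmt19_Gamma_achiever M0 hk
    set G := Finset.univ.filter (fun i' => rowSupp M0 i' = rowSupp M0 i0) with hG
    have hGmem : i0 ∈ G := by simp [hG]
    have hGbi : G.biUnion (rowSupp M0) = rowSupp M0 i0 := by
      ext c
      simp only [Finset.mem_biUnion]
      constructor
      · rintro ⟨i, hi, hc⟩
        rw [hG, Finset.mem_filter] at hi
        rwa [hi.2] at hc
      · intro hc; exact ⟨i0, hGmem, hc⟩
    have hA0G : (Finset.univ.filter (fun c => colSupp M0 c ⊆ Gᶜ)).card + wmin M0 = t := by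
      have h := cardA0compl Gᶜ
      rwa [compl_compl, hGbi, hi0w] at h
    set ℓ := k - Gamma M0 + 1 with hℓdef
    have hcard : ℓ + d ≤ β * (Finset.univ.filter (fun c => colSupp M0 c ⊆ Gᶜ)).card := by
      have h1 : β * ((Finset.univ.filter (fun c => colSupp M0 c ⊆ Gᶜ)).card) + β * wmin M0
          = β * t := by rw [← Nat.mul_add, hA0G]
      omega
    obtain ⟨J, hJsub, hJcard⟩ := Finset.exists_subset_card_eq
      (s := Finset.univ.filter (fun j : Fin (t*β) => colSupp M j ⊆ Gᶜ)) (n := ℓ + d)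
      (by rw [cardA Gᶜ]; exact hcard)
    have hℓ1 : 1 ≤ ℓ := by omega
    have hℓk : ℓ ≤ k := by omega
    have hbig := hd.2 ℓ hℓ1 hℓk J hJcard
    have hsub2 : J.biUnion (colSupp M) ⊆ Gᶜ := by
      intro i hi
      obtain ⟨j, hjJ, hij⟩ := Finset.mem_biUnion.mp hi
      have hjF := hJsub hjJ
      simp only [Finset.mem_filter, Finset.mem_univ, true_and] at hjF
      exact hjF hij
    have hGcard : G.card = Gamma M0 := by rw [hi0G, hG]
    have hcard2 : (J.biUnion (colSupp M)).card ≤ k - Gamma M0 := by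
      calc (J.biUnion (colSupp M)).card ≤ (Gᶜ).card := Finset.card_le_card hsub2
        _ = k - Gamma M0 := by rw [Finset.card_compl, hGcard]; simp
    omega
  have hD0 : delta0 M = D := by
    unfold delta0
    exact le_antisymm (Nat.sInf_le hDmem) (le_csInf ⟨D, hDmem⟩ hlb)
  have hfin : D + k + β * wmin M0 = β * t + Gamma M0 := by omega
  constructor
  · rw [hD0]
    have hc2 : (t - wmin M0) * β = β * (t - wmin M0) := Nat.mul_comm _ _
    omega
  · rw [hD0]
    have hcast := congrArg (Nat.cast : ℕ → ℤ) hfin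
    push_cast at hcast ⊢
    linear_combination hcast
end
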